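/- arXiv:math/0607420 — 2 statements merged into one kernel-verified Lean document; each statement's English description precedes it below -/
import Mathlib

section
/- Let F(A,θ) = ⟨A ; ab=ba for (a,b) ∈ θ⟩ be the free partially commutative group and (B,Z) a partition of A. Then F(A,θ) decomposes as a semidirect product F(A,θ) = F(B,θ_B) ⋉ H_Z, where H_Z is the normal subgroup generated by Z; moreover H_Z is generated (as a group) by the set ρ_Z(B) = {w⁻¹ z w : zw ∈ β_Z^R(B̃)}. -/
namespace PCM

variable {A : Type*}

/-- Elementary commutation relation on words. -/
def TraceRel (θ : A → A → Prop) : FreeMonoid A → FreeMonoid A → Prop :=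
  fun x y => ∃ a b, θ a b ∧ x = FreeMonoid.of a * FreeMonoid.of b ∧
    y = FreeMonoid.of b * FreeMonoid.of a

/-- The congruence generated by the commutations. -/
def traceCon (θ : A → A → Prop) : Con (FreeMonoid A) := conGen (TraceRel θ)

/-- The free partially commutative (trace) monoid `M(A,θ)`. -/
abbrev Trace (A : Type*) (θ : A → A → Prop) := (traceCon θ).Quotient

/-- Canonical projection from words to traces. -/
def trMk (θ : A → A → Prop) : FreeMonoid A →* Trace A θ := (traceCon θ).mk'

/-- The trace of a single letter. -/
def trOf (θ : A → A → Prop) (a : A) : Trace A θ := trMk θ (FreeMonoid.of a)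

/-- `IA t` : the set of possible initial letters of a trace. -/
def IA (θ : A → A → Prop) (t : Trace A θ) : Set A := {a | ∃ w, t = trOf θ a * w}

/-- The alphabet of a trace. -/
def Alph (θ : A → A → Prop) (t : Trace A θ) : Set A :=
  {a | ∃ l : List A, trMk θ (FreeMonoid.ofList l) = t ∧ a ∈ l}

/-- The submonoid `M(B,θ_B)` generated by a subalphabet. -/
def subTr (θ : A → A → Prop) (B : Set A) : Submonoid (Trace A θ) :=
  Submonoid.closure (trOf θ '' B)

/-- `β_Z(B)` where `Z = A - B`. -/
def beta (θ : A → A → Prop) (B : Set A) : Set (Trace A θ) :=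
  {t | ∃ z, z ∉ B ∧ ∃ w ∈ subTr θ B, t = trOf θ z * w ∧ IA θ t = {z}}

/-- The induced independence relation `θ_X` on a set of traces. -/
def thetaX (θ : A → A → Prop) (X : Set (Trace A θ)) (x y : X) : Prop :=
  ∀ a ∈ Alph θ (x : Trace A θ), ∀ b ∈ Alph θ (y : Trace A θ), θ a b

/-- `X` is a partially commutative code : the canonical morphism from
`M(X,θ_X)` is injective. -/
def IsPCCode (θ : A → A → Prop) (X : Set (Trace A θ)) : Prop :=
  ∃ f : Trace X (thetaX θ X) →* Trace A θ,
    (∀ x : X, f (trOf (thetaX θ X) x) = (x : Trace A θ)) ∧ Function.Injective f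

/-- Dependence relation (edges of the dependence graph). -/
def dep (θ : A → A → Prop) (a b : A) : Prop := a ≠ b ∧ ¬ θ a b

/-- A path `z - b₁ - ⋯ - bₙ - z'` in the dependence graph with inner vertices in `B`. -/
def DepPathB (θ : A → A → Prop) (B : Set A) (z z' : A) : Prop :=
  ∃ l : List A, (∀ b ∈ l, b ∈ B) ∧ List.Chain (dep θ) z (l ++ [z'])

/-- `B` is a transitively factorizing subalphabet. -/
def IsTFSA (θ : A → A → Prop) (B : Set A) : Prop :=
  ∀ z z', z ∉ B → z' ∉ B → θ z z' → ¬ DepPathB θ B z z'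

end PCM

namespace PCM

variable {A : Type*}

/-- Forget the bar of a signed letter of `Ã = A ∪ Ā`. -/
def unbar : A ⊕ A → A := Sum.elim id id

/-- The independence relation `θ̃` on `Ã = A ∪ Ā`. -/
def tilde (θ : A → A → Prop) : (A ⊕ A) → (A ⊕ A) → Prop :=
  fun x y => θ (unbar x) (unbar y)

/-- Commutation relators for the free partially commutative group. -/
def pcRels (θ : A → A → Prop) : Set (FreeGroup A) :=
  {w | ∃ a b, θ a b ∧
    w = FreeGroup.of a * FreeGroup.of b * (FreeGroup.of a)⁻¹ * (FreeGroup.of b)⁻¹}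

/-- The free partially commutative group `F(A,θ)`. -/
abbrev PCGroup (A : Type*) (θ : A → A → Prop) := PresentedGroup (pcRels θ)

/-- The generator of `F(A,θ)` corresponding to a letter. -/
def gOf (θ : A → A → Prop) (a : A) : PCGroup A θ := PresentedGroup.of a

/-- A trace has length `n`. -/
def HasLen (θ : A → A → Prop) (t : Trace A θ) (n : ℕ) : Prop :=
  ∃ l : List A, trMk θ (FreeMonoid.ofList l) = t ∧ l.length = n

/-- `s` is the canonical morphism `M(Ã,θ̃) → F(A,θ)`. -/
def IsSection (θ : A → A → Prop)
    (s : Trace (A ⊕ A) (tilde θ) →* PCGroup A θ) : Prop :=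
  (∀ a : A, s (trOf (tilde θ) (Sum.inl a)) = gOf θ a) ∧
  (∀ a : A, s (trOf (tilde θ) (Sum.inr a)) = (gOf θ a)⁻¹)

/-- A trace over `Ã` is reduced: it has minimal length in its fiber under `s`. -/
def ReducedWrt (θ : A → A → Prop)
    (s : Trace (A ⊕ A) (tilde θ) →* PCGroup A θ)
    (t : Trace (A ⊕ A) (tilde θ)) : Prop :=
  ∀ (t' : Trace (A ⊕ A) (tilde θ)) (n n' : ℕ),
    s t' = s t → HasLen (tilde θ) t n → HasLen (tilde θ) t' n' → n ≤ n'

/-- `ρ_Z(B) = {w⁻¹zw | zw ∈ β_Z^R(B̃)}` inside `F(A,θ)`. -/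
def rhoSet (θ : A → A → Prop) (B : Set A)
    (s : Trace (A ⊕ A) (tilde θ) →* PCGroup A θ) : Set (PCGroup A θ) :=
  {g | ∃ z, z ∉ B ∧ ∃ wl : List (A ⊕ A), (∀ x ∈ wl, unbar x ∈ B) ∧
    IA (tilde θ) (trMk (tilde θ) (FreeMonoid.ofList (Sum.inl z :: wl))) = {Sum.inl z} ∧
    ReducedWrt θ s (trMk (tilde θ) (FreeMonoid.ofList (Sum.inl z :: wl))) ∧
    g = (s (trMk (tilde θ) (FreeMonoid.ofList wl)))⁻¹ * gOf θ z *
        s (trMk (tilde θ) (FreeMonoid.ofList wl))}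

/-- The set `β_Z^R(B̃)` of reduced traces `zw`. -/
def betaR (θ : A → A → Prop) (B : Set A)
    (s : Trace (A ⊕ A) (tilde θ) →* PCGroup A θ) : Set (Trace (A ⊕ A) (tilde θ)) :=
  {t | ∃ z, z ∉ B ∧ ∃ wl : List (A ⊕ A), (∀ x ∈ wl, unbar x ∈ B) ∧
    t = trMk (tilde θ) (FreeMonoid.ofList (Sum.inl z :: wl)) ∧
    IA (tilde θ) t = {Sum.inl z} ∧ ReducedWrt θ s t}

end PCM



namespace PCM

variable {X : Type*} {φ : X → X → Prop}

/-- shorthand -/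
def tr (φ : X → X → Prop) (l : List X) : Trace X φ := trMk φ (FreeMonoid.ofList l)

@[simp] lemma tr_nil : tr φ ([] : List X) = 1 := by
  simp [tr, FreeMonoid.ofList_nil]

@[simp] lemma tr_append (l l' : List X) : tr φ (l ++ l') = tr φ l * tr φ l' := by
  simp [tr, FreeMonoid.ofList_append]

@[simp] lemma tr_cons (a : X) (l : List X) : tr φ (a :: l) = trOf φ a * tr φ l := by
  exact tr_append (φ := φ) [a] l

@[simp] lemma tr_singleton (a : X) : tr φ [a] = trOf φ a := rfl

lemma tr_surjective (t : Trace X φ) : ∃ l : List X, tr φ l = t := by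
  obtain ⟨w, rfl⟩ := Con.mk'_surjective (c := traceCon φ) t
  exact ⟨FreeMonoid.toList w, by simp [tr, FreeMonoid.ofList_toList]; rfl⟩

lemma trOf_comm {a b : X} (h : φ a b) : trOf φ a * trOf φ b = trOf φ b * trOf φ a := by
  have : (traceCon φ) (FreeMonoid.of a * FreeMonoid.of b) (FreeMonoid.of b * FreeMonoid.of a) :=
    ConGen.Rel.of _ _ ⟨a, b, h, rfl, rfl⟩
  simpa [trOf, trMk, map_mul] using (Con.eq _).2 this

/-- Universal lifting out of the trace monoid. -/
def traceLift {M : Type*} [Monoid M] (f : X → M)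
    (hf : ∀ a b, φ a b → Commute (f a) (f b)) : Trace X φ →* M :=
  (traceCon φ).lift (FreeMonoid.lift f) (Con.conGen_le.mpr (by
    rintro x y ⟨a, b, hab, rfl, rfl⟩
    simp only [Con.ker_rel, map_mul, FreeMonoid.lift_eval_of]
    exact (hf a b hab).eq))

@[simp] lemma traceLift_tr {M : Type*} [Monoid M] (f : X → M)
    (hf : ∀ a b, φ a b → Commute (f a) (f b)) (l : List X) :
    traceLift f hf (tr φ l) = (l.map f).prod := by
  erw [tr, trMk, traceLift, Con.lift_mk', FreeMonoid.lift_ofList]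

@[simp] lemma traceLift_trOf {M : Type*} [Monoid M] (f : X → M)
    (hf : ∀ a b, φ a b → Commute (f a) (f b)) (a : X) :
    traceLift f hf (trOf φ a) = f a := by
  rw [← tr_singleton, traceLift_tr]; simp

/-- length of a trace -/
def tlen (t : Trace X φ) : ℕ :=
  Multiplicative.toAdd (traceLift (M := Multiplicative ℕ)
    (fun _ => Multiplicative.ofAdd 1) (fun _ _ _ => Commute.all _ _) t)

@[simp] lemma tlen_tr (l : List X) : tlen (tr φ l) = l.length := by
  simp only [tlen, traceLift_tr]
  induction l with
  | nil => simp
  | cons a l ih => simp_all [List.map_cons, List.prod_cons]; omega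

@[simp] lemma tlen_mul (s t : Trace X φ) : tlen (s * t) = tlen s + tlen t := by
  simp [tlen, map_mul]

@[simp] lemma tlen_one : tlen (1 : Trace X φ) = 0 := by
  simpa using tlen_tr (φ := φ) []

@[simp] lemma tlen_trOf (a : X) : tlen (trOf φ a) = 1 := by
  simpa using tlen_tr (φ := φ) [a]

/-- content (multiset of letters) of a trace -/
def cnt (t : Trace X φ) : Multiset X :=
  Multiplicative.toAdd (traceLift (M := Multiplicative (Multiset X))
    (fun a => Multiplicative.ofAdd {a}) (fun _ _ _ => Commute.all _ _) t)

@[simp] lemma cnt_tr (l : List X) : cnt (tr φ l) = (l : Multiset X) := by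
  simp only [cnt, traceLift_tr]
  induction l with
  | nil => simp
  | cons a l ih =>
    simp_all [List.map_cons, List.prod_cons]

@[simp] lemma cnt_mul (s t : Trace X φ) : cnt (s * t) = cnt s + cnt t := by
  simp [cnt, map_mul]

@[simp] lemma cnt_one : cnt (1 : Trace X φ) = 0 := by
  simpa using cnt_tr (φ := φ) []

@[simp] lemma cnt_trOf (a : X) : cnt (trOf φ a) = {a} := by
  simpa using cnt_tr (φ := φ) [a]

lemma eq_one_of_tlen_eq_zero {t : Trace X φ} (h : tlen t = 0) : t = 1 := by
  obtain ⟨l, rfl⟩ := tr_surjective t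
  simp only [tlen_tr] at h
  simp [List.length_eq_zero_iff.mp h]

lemma exists_cons_of_ne_one {t : Trace X φ} (h : t ≠ 1) :
    ∃ a u, t = trOf φ a * u ∧ tlen u + 1 = tlen t := by
  obtain ⟨l, rfl⟩ := tr_surjective t
  cases l with
  | nil => simp at h
  | cons a l => exact ⟨a, tr φ l, by simp, by simp [Nat.add_comm]⟩

end PCM

namespace PCM

variable {X : Type*} {φ : X → X → Prop}

section Proj

open scoped Classical

variable (hirr : ∀ x : X, ¬ φ x x) (hsym : ∀ x y, φ x y → φ y x)

/-- projection of a trace to the (dependent) pair of letters `{a, b}` -/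
noncomputable def prT (a b : X) (hab : ¬ φ a b) : Trace X φ →* FreeMonoid X :=
  traceLift (fun c => if c = a ∨ c = b then FreeMonoid.of c else 1) (by
    intro c d hcd
    by_cases hc : c = a ∨ c = b
    · by_cases hd : d = a ∨ d = b
      · exfalso
        have hne : c ≠ d := fun h => hirr c (h ▸ hcd)
        rcases hc with rfl | rfl <;> rcases hd with rfl | rfl
        · exact hne rfl
        · exact hab hcd
        · exact hab (hsym _ _ hcd)
        · exact hne rfl
      · simp [hc, hd, Commute.one_right]
    · simp [hc, Commute.one_left])

variable {a b : X} (hab : ¬ φ a b)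

@[simp] lemma prT_trOf (c : X) :
    prT hirr hsym a b hab (trOf φ c) = if c = a ∨ c = b then FreeMonoid.of c else 1 := by
  simp [prT]

@[simp] lemma prT_trOf_left :
    prT hirr hsym a b hab (trOf φ a) = FreeMonoid.of a := by simp

lemma prT_trOf_of_ne {c : X} (hca : c ≠ a) (hcb : c ≠ b) :
    prT hirr hsym a b hab (trOf φ c) = 1 := by simp [hca, hcb]

end Proj

section Recon

variable (hirr : ∀ x : X, ¬ φ x x) (hsym : ∀ x y, φ x y → φ y x)
include hirr hsym

/-- Reconstruction criterion: if every projection on a dependent pair `{a,b}`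
starts with `a`, then the trace starts with `a`. -/
lemma head_of_proj (a : X) :
    ∀ n (t : Trace X φ), tlen t = n →
      (∀ b (hb : ¬ φ a b), (FreeMonoid.toList (prT hirr hsym a b hb t)).head? = some a) →
      ∃ u, t = trOf φ a * u := by
  intro n
  induction n using Nat.strong_induction_on with
  | _ n ih =>
    intro t hlen hproj
    have ht1 : t ≠ 1 := by
      rintro rfl
      have := hproj a (hirr a)
      simp [FreeMonoid.toList_one] at this
    obtain ⟨c, u, rfl, hlt⟩ := exists_cons_of_ne_one ht1
    by_cases hca : c = a
    · exact ⟨u, by rw [hca]⟩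
    · -- c ≠ a ; first, a and c must be independent
      have hφac : φ a c := by
        by_contra hnac
        have := hproj c hnac
        rw [map_mul, prT_trOf] at this
        simp only [hca, or_true, if_true] at this
        simp [FreeMonoid.toList_mul, FreeMonoid.toList_of] at this
        exact hca this
      -- projections of u also start with a
      have hproj' : ∀ b (hb : ¬ φ a b),
          (FreeMonoid.toList (prT hirr hsym a b hb u)).head? = some a := by
        intro b hb
        have hcb : c ≠ b := by
          rintro rfl; exact hb hφac
        have := hproj b hb
        rwa [map_mul, prT_trOf_of_ne hirr hsym hb hca hcb, one_mul] at this
      obtain ⟨v, rfl⟩ := ih (tlen u) (by omega) u rfl hproj'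
      refine ⟨trOf φ c * v, ?_⟩
      rw [← mul_assoc, ← mul_assoc, trOf_comm (hsym _ _ hφac)]

/-- Projection injectivity (Cori–Perrin). -/
lemma proj_injective :
    ∀ n (t t' : Trace X φ), tlen t = n →
      (∀ a b (hb : ¬ φ a b), prT hirr hsym a b hb t = prT hirr hsym a b hb t') →
      t = t' := by
  intro n
  induction n using Nat.strong_induction_on with
  | _ n ih =>
    intro t t' hlen hproj
    by_cases ht1 : t = 1
    · subst ht1
      by_contra hne
      obtain ⟨c, u, rfl, -⟩ := exists_cons_of_ne_one (fun h => hne h.symm)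
      have := hproj c c (hirr c)
      rw [map_one, map_mul, prT_trOf_left] at this
      have := congrArg FreeMonoid.toList this
      simp [FreeMonoid.toList_one, FreeMonoid.toList_mul] at this
    · obtain ⟨c, u, rfl, hlt⟩ := exists_cons_of_ne_one ht1
      -- t' also starts with c
      have hhead : ∀ b (hb : ¬ φ c b),
          (FreeMonoid.toList (prT hirr hsym c b hb t')).head? = some c := by
        intro b hb
        rw [← hproj c b hb, map_mul, prT_trOf_left]
        simp [FreeMonoid.toList_mul]
      obtain ⟨u', rfl⟩ := head_of_proj hirr hsym c (tlen t') t' rfl hhead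
      have hu : u = u' := by
        refine ih (tlen u) (by omega) u u' rfl ?_
        intro a' b' hb'
        have := hproj a' b' hb'
        rw [map_mul, map_mul] at this
        by_cases hc : c = a' ∨ c = b'
        · rw [prT_trOf] at this
          simp only [hc, if_true] at this
          have := congrArg FreeMonoid.toList this
          simp only [FreeMonoid.toList_mul, FreeMonoid.toList_of, List.cons_append,
            List.nil_append, List.cons.injEq] at this
          exact FreeMonoid.toList.injective this.2
        · push_neg at hc
          rwa [prT_trOf_of_ne hirr hsym _ hc.1 hc.2, one_mul, one_mul] at this
      rw [hu]

/-- left cancellation of a letter -/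
lemma trOf_left_cancel {a : X} {u v : Trace X φ}
    (h : trOf φ a * u = trOf φ a * v) : u = v := by
  refine proj_injective hirr hsym (tlen u) u v rfl ?_
  intro c d hd
  have := congrArg (prT hirr hsym c d hd) h
  rw [map_mul, map_mul] at this
  exact mul_left_cancel this

/-- Levi-type lemma for two distinct heads. -/
lemma heads_comm {a c : X} {u v : Trace X φ} (hne : a ≠ c)
    (h : trOf φ c * u = trOf φ a * v) :
    φ a c ∧ ∃ r, u = trOf φ a * r ∧ v = trOf φ c * r := by
  have hφac : φ a c := by
    by_contra hnac
    have := congrArg (prT hirr hsym a c hnac) h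
    rw [map_mul, map_mul, prT_trOf_left, prT_trOf] at this
    simp only [ne_comm.mp hne, hne, or_true, if_true] at this
    have := congrArg FreeMonoid.toList this
    simp only [FreeMonoid.toList_mul, FreeMonoid.toList_of, List.cons_append,
      List.nil_append, List.cons.injEq] at this
    exact hne this.1.symm
  -- a starts c * u, hence a starts u
  have hhead : ∀ b (hb : ¬ φ a b),
      (FreeMonoid.toList (prT hirr hsym a b hb u)).head? = some a := by
    intro b hb
    have hca : c ≠ a := ne_comm.mp hne
    have hcb : c ≠ b := by rintro rfl; exact hb hφac
    have := congrArg (prT hirr hsym a b hb) h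
    rw [map_mul, map_mul, prT_trOf_of_ne hirr hsym hb hca hcb, one_mul,
      prT_trOf_left] at this
    rw [this]
    simp [FreeMonoid.toList_mul]
  obtain ⟨r, rfl⟩ := head_of_proj hirr hsym a (tlen u) u rfl hhead
  refine ⟨hφac, r, rfl, ?_⟩
  have : trOf φ a * (trOf φ c * r) = trOf φ a * v := by
    rw [← mul_assoc, ← trOf_comm (hsym _ _ hφac), mul_assoc, h]
  exact (trOf_left_cancel hirr hsym this).symm

end Recon

end PCM

namespace PCM

variable {A : Type*}

def bar : A ⊕ A → A ⊕ A := Sum.elim Sum.inr Sum.inl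

@[simp] lemma unbar_bar (x : A ⊕ A) : unbar (bar x) = unbar x := by cases x <;> rfl
@[simp] lemma bar_bar (x : A ⊕ A) : bar (bar x) = x := by cases x <;> rfl

lemma bar_ne (x : A ⊕ A) : bar x ≠ x := by cases x <;> simp [bar]

section Signed

variable {θ : A → A → Prop}

lemma tilde_irr (hanti : ∀ a, ¬ θ a a) : ∀ x : A ⊕ A, ¬ tilde θ x x := fun _ h => hanti _ h

lemma tilde_symm (hsymm : ∀ a b, θ a b → θ b a) : ∀ x y : A ⊕ A, tilde θ x y → tilde θ y x := fun _ _ h => hsymm _ _ h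

@[simp] lemma tilde_bar_left {x y : A ⊕ A} : tilde θ (bar x) y ↔ tilde θ x y := by
  simp [tilde]

@[simp] lemma tilde_bar_right {x y : A ⊕ A} : tilde θ x (bar y) ↔ tilde θ x y := by
  simp [tilde]

variable (hanti : ∀ a, ¬ θ a a) (hsymm : ∀ a b, θ a b → θ b a)
include hanti hsymm

omit hsymm in
lemma ne_of_tilde {x y : A ⊕ A} (h : tilde θ x y) : x ≠ y := by
  rintro rfl; exact tilde_irr hanti x h

omit hsymm in
lemma bar_ne_of_tilde {x y : A ⊕ A} (h : tilde θ x y) : bar x ≠ y := by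
  rintro rfl
  exact hanti (unbar x) (by simpa [tilde] using h)

omit hanti hsymm in
/-- a trace contains a cancellable adjacent pair -/
def HasPairT (t : Trace (A ⊕ A) (tilde θ)) : Prop :=
  ∃ p x q, t = p * (trOf (tilde θ) x * (trOf (tilde θ) (bar x) * q))

omit hanti hsymm in
lemma HasPairT.mul_left {t : Trace (A ⊕ A) (tilde θ)} (h : HasPairT t)
    (s : Trace (A ⊕ A) (tilde θ)) : HasPairT (s * t) := by
  obtain ⟨p, x, q, rfl⟩ := h
  exact ⟨s * p, x, q, by rw [mul_assoc]⟩

omit hanti hsymm in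
lemma HasPairT.mul_right {t : Trace (A ⊕ A) (tilde θ)} (h : HasPairT t)
    (s : Trace (A ⊕ A) (tilde θ)) : HasPairT (t * s) := by
  obtain ⟨p, x, q, rfl⟩ := h
  exact ⟨p, x, q * s, by simp [mul_assoc]⟩

/-- Key pulling lemma: if `a · u` contains a cancellable pair, then either `u`
does, or `u` starts with `bar a`. -/
lemma pair_pull :
    ∀ n (p : Trace (A ⊕ A) (tilde θ)) (x : A ⊕ A) (q u : Trace (A ⊕ A) (tilde θ))
      (a : A ⊕ A), tlen p = n →
      trOf (tilde θ) a * u = p * (trOf (tilde θ) x * (trOf (tilde θ) (bar x) * q)) →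
      HasPairT u ∨ ∃ v, u = trOf (tilde θ) (bar a) * v := by
  have hirr := tilde_irr (θ := θ) hanti
  have hsym := tilde_symm (θ := θ) hsymm
  intro n
  induction n using Nat.strong_induction_on with
  | _ n ih =>
    intro p x q u a hlen heq
    by_cases hp1 : p = 1
    · subst hp1
      rw [one_mul] at heq
      by_cases hxa : x = a
      · subst hxa
        exact Or.inr ⟨q, trOf_left_cancel hirr hsym heq⟩
      · obtain ⟨hφ, r, hr1, hr2⟩ :=
          heads_comm hirr hsym (fun h => hxa h.symm) heq.symm
        by_cases hxba : bar x = a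
        · refine Or.inr ⟨r, ?_⟩
          rw [hr2, ← bar_bar (A := A) x, hxba]
        · obtain ⟨hφ2, r₂, hq, hr⟩ :=
            heads_comm hirr hsym (fun h => hxba h.symm) hr1
          exact Or.inl ⟨1, x, r₂, by rw [hr2, hr, one_mul]⟩
    · obtain ⟨c, p₁, rfl, hl⟩ := exists_cons_of_ne_one hp1
      rw [mul_assoc] at heq
      by_cases hca : c = a
      · subst hca
        exact Or.inl ⟨p₁, x, q, trOf_left_cancel hirr hsym heq⟩
      · obtain ⟨hφ, r, hr1, hr2⟩ :=
          heads_comm hirr hsym (fun h => hca h.symm) heq.symm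
        rcases ih (tlen p₁) (by rw [← hlen]; omega) p₁ x q r a rfl hr1.symm with
          hpair | ⟨v, hv⟩
        · obtain ⟨p₂, y, q₂, hr⟩ := hpair
          exact Or.inl ⟨trOf (tilde θ) c * p₂, y, q₂, by rw [hr2, hr, mul_assoc]⟩
        · refine Or.inr ⟨trOf (tilde θ) c * v, ?_⟩
          rw [hr2, hv, ← mul_assoc, ← mul_assoc,
            trOf_comm (tilde_bar_right.mpr (hsym _ _ hφ))]

end Signed

end PCM

namespace PCM

variable {A : Type*}

section NFsec

variable {θ : A → A → Prop}

lemma hasLen_iff {t : Trace A θ} {n : ℕ} : HasLen θ t n ↔ tlen t = n := by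
  constructor
  · rintro ⟨l, rfl, rfl⟩; exact tlen_tr l
  · rintro rfl
    obtain ⟨l, rfl⟩ := tr_surjective t
    exact ⟨l, rfl, (tlen_tr l).symm⟩

/-- normal form: no cancellable adjacent pair -/
def NF (t : Trace (A ⊕ A) (tilde θ)) : Prop := ¬ HasPairT t

lemma NF_one : NF (1 : Trace (A ⊕ A) (tilde θ)) := by
  rintro ⟨p, x, q, hp⟩
  have := congrArg tlen hp
  simp at this
  omega

lemma NF.of_mul_left {s t : Trace (A ⊕ A) (tilde θ)} (h : NF (s * t)) : NF t :=
  fun hp => h (hp.mul_left s)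

lemma NF.of_mul_right {s t : Trace (A ⊕ A) (tilde θ)} (h : NF (s * t)) : NF s :=
  fun hp => h (hp.mul_right t)

end NFsec

/-- the set of normal-form traces -/
def NFT (θ : A → A → Prop) := {t : Trace (A ⊕ A) (tilde θ) // NF t}

section Action

open scoped Classical

variable {θ : A → A → Prop} (hanti : ∀ a, ¬ θ a a) (hsymm : ∀ a b, θ a b → θ b a)

include hanti hsymm

omit hanti hsymm in
lemma nf_cancel {t v : Trace (A ⊕ A) (tilde θ)} {x : A ⊕ A} (ht : NF t)
    (hv : t = trOf (tilde θ) (bar x) * v) : NF v := by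
  intro hp
  exact ht (hv ▸ hp.mul_left _)

lemma nf_app {t : Trace (A ⊕ A) (tilde θ)} {x : A ⊕ A} (ht : NF t)
    (h : ¬ ∃ v, t = trOf (tilde θ) (bar x) * v) : NF (trOf (tilde θ) x * t) := by
  rintro ⟨p, y, q, hd⟩
  rcases pair_pull hanti hsymm (tlen p) p y q t x rfl hd with hp | ⟨v, hv⟩
  · exact ht hp
  · exact h ⟨v, hv⟩

omit hanti hsymm in
lemma nf_cons {t : Trace (A ⊕ A) (tilde θ)} {x : A ⊕ A}
    (h : NF (trOf (tilde θ) x * t)) : ¬ ∃ v, t = trOf (tilde θ) (bar x) * v := by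
  rintro ⟨v, rfl⟩
  exact h ⟨1, x, v, by rw [one_mul]⟩

/-- action of the letter `x` on normal forms -/
noncomputable def sig (x : A ⊕ A) (t : NFT θ) : NFT θ :=
  if h : ∃ v, t.1 = trOf (tilde θ) (bar x) * v then
    ⟨h.choose, nf_cancel t.2 h.choose_spec⟩
  else ⟨trOf (tilde θ) x * t.1, nf_app hanti hsymm t.2 h⟩

lemma sig_cancel {x : A ⊕ A} {t : NFT θ} {v : Trace (A ⊕ A) (tilde θ)}
    (hv : t.1 = trOf (tilde θ) (bar x) * v) :
    (sig hanti hsymm x t).1 = v := by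
  have hex : ∃ v, t.1 = trOf (tilde θ) (bar x) * v := ⟨v, hv⟩
  have h1 : (sig hanti hsymm x t).1 = hex.choose := congrArg Subtype.val (dif_pos hex)
  rw [h1]
  exact trOf_left_cancel (tilde_irr hanti) (tilde_symm hsymm)
    (hex.choose_spec.symm.trans hv)

lemma sig_app {x : A ⊕ A} {t : NFT θ}
    (h : ¬ ∃ v, t.1 = trOf (tilde θ) (bar x) * v) :
    (sig hanti hsymm x t).1 = trOf (tilde θ) x * t.1 := by
  exact congrArg Subtype.val (dif_neg h)

lemma sig_inv (x : A ⊕ A) (t : NFT θ) :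
    sig hanti hsymm (bar x) (sig hanti hsymm x t) = t := by
  by_cases h : ∃ v, t.1 = trOf (tilde θ) (bar x) * v
  · obtain ⟨v, hv⟩ := h
    have h1 : (sig hanti hsymm x t).1 = v := sig_cancel hanti hsymm hv
    have h2 : ¬ ∃ w, (sig hanti hsymm x t).1 = trOf (tilde θ) (bar (bar x)) * w := by
      rw [h1, bar_bar]
      rintro ⟨w, rfl⟩
      exact t.2 ⟨1, bar x, w, by rw [one_mul, bar_bar]; exact hv⟩
    apply Subtype.ext
    rw [sig_app hanti hsymm h2, h1, ← hv]
  · have h1 : (sig hanti hsymm x t).1 = trOf (tilde θ) x * t.1 := sig_app hanti hsymm h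
    have h2 : (sig hanti hsymm x t).1 = trOf (tilde θ) (bar (bar x)) * t.1 := by
      rw [h1, bar_bar]
    apply Subtype.ext
    rw [sig_cancel hanti hsymm h2]

/-- the letter action as a permutation -/
noncomputable def sigE (x : A ⊕ A) : Equiv.Perm (NFT θ) :=
  ⟨sig hanti hsymm x, sig hanti hsymm (bar x),
    fun t => sig_inv hanti hsymm x t,
    fun t => by simpa using sig_inv hanti hsymm (bar x) t⟩

@[simp] lemma sigE_apply (x : A ⊕ A) (t : NFT θ) :
    sigE hanti hsymm x t = sig hanti hsymm x t := rfl

@[simp] lemma sigE_inv (x : A ⊕ A) :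
    (sigE hanti hsymm x)⁻¹ = sigE hanti hsymm (bar x) := Equiv.ext fun t => rfl

/-- the actions of independent letters commute (one-sided case) -/
lemma sig_comm_aux {x y : A ⊕ A} (hxy : tilde θ x y) (t : NFT θ)
    (hy : ∃ v, t.1 = trOf (tilde θ) (bar y) * v)
    (hx : ¬ ∃ w, t.1 = trOf (tilde θ) (bar x) * w) :
    sig hanti hsymm x (sig hanti hsymm y t) =
      sig hanti hsymm y (sig hanti hsymm x t) := by
  have hirr := tilde_irr (θ := θ) hanti
  have hsym := tilde_symm (θ := θ) hsymm
  obtain ⟨v, hv⟩ := hy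
  have h1 : (sig hanti hsymm y t).1 = v := sig_cancel hanti hsymm hv
  have hxv : ¬ ∃ w, v = trOf (tilde θ) (bar x) * w := by
    rintro ⟨w, rfl⟩
    refine hx ⟨trOf (tilde θ) (bar y) * w, ?_⟩
    rw [hv, ← mul_assoc, ← mul_assoc,
      trOf_comm (tilde_bar_right.mpr (tilde_bar_left.mpr (hsym _ _ hxy)))]
  -- LHS
  have hL : (sig hanti hsymm x (sig hanti hsymm y t)).1 = trOf (tilde θ) x * v := by
    rw [sig_app hanti hsymm (by rw [h1]; exact hxv), h1]
  -- RHS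
  have h2 : (sig hanti hsymm x t).1 = trOf (tilde θ) x * t.1 := sig_app hanti hsymm hx
  have h3 : (sig hanti hsymm x t).1 =
      trOf (tilde θ) (bar y) * (trOf (tilde θ) x * v) := by
    rw [h2, hv, ← mul_assoc, ← mul_assoc,
      trOf_comm (tilde_bar_right.mpr hxy)]
  apply Subtype.ext
  rw [hL, sig_cancel hanti hsymm h3]

lemma sig_comm {x y : A ⊕ A} (hxy : tilde θ x y) (t : NFT θ) :
    sig hanti hsymm x (sig hanti hsymm y t) =
      sig hanti hsymm y (sig hanti hsymm x t) := by
  have hirr := tilde_irr (θ := θ) hanti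
  have hsym := tilde_symm (θ := θ) hsymm
  by_cases hy : ∃ v, t.1 = trOf (tilde θ) (bar y) * v
  · by_cases hx : ∃ w, t.1 = trOf (tilde θ) (bar x) * w
    · obtain ⟨v, hv⟩ := hy
      obtain ⟨w, hw⟩ := hx
      have hne : bar x ≠ bar y := by
        intro h
        have hxy' : x = y := by rw [← bar_bar (A := A) x, h, bar_bar]
        exact ne_of_tilde hanti hxy hxy'
      obtain ⟨hφ, r, hr1, hr2⟩ := heads_comm hirr hsym hne (hv.symm.trans hw)
      apply Subtype.ext
      rw [sig_cancel hanti hsymm (show (sig hanti hsymm y t).1 =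
          trOf (tilde θ) (bar x) * r by rw [sig_cancel hanti hsymm hv]; exact hr1),
        sig_cancel hanti hsymm (show (sig hanti hsymm x t).1 =
          trOf (tilde θ) (bar y) * r by rw [sig_cancel hanti hsymm hw]; exact hr2)]
    · exact sig_comm_aux hanti hsymm hxy t hy hx
  · by_cases hx : ∃ w, t.1 = trOf (tilde θ) (bar x) * w
    · exact (sig_comm_aux hanti hsymm (hsym _ _ hxy) t hx hy).symm
    · have hLy : (sig hanti hsymm y t).1 = trOf (tilde θ) y * t.1 :=
        sig_app hanti hsymm hy
      have hLx : (sig hanti hsymm x t).1 = trOf (tilde θ) x * t.1 :=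
        sig_app hanti hsymm hx
      have hnx : ¬ ∃ w, (sig hanti hsymm y t).1 = trOf (tilde θ) (bar x) * w := by
        rw [hLy]
        rintro ⟨w, hw⟩
        have hne : bar x ≠ y := bar_ne_of_tilde hanti hxy
        obtain ⟨-, r, hr1, -⟩ := heads_comm hirr hsym hne hw
        exact hx ⟨r, hr1⟩
      have hny : ¬ ∃ w, (sig hanti hsymm x t).1 = trOf (tilde θ) (bar y) * w := by
        rw [hLx]
        rintro ⟨w, hw⟩
        have hne : bar y ≠ x := bar_ne_of_tilde hanti (hsym _ _ hxy)
        obtain ⟨-, r, hr1, -⟩ := heads_comm hirr hsym hne hw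
        exact hy ⟨r, hr1⟩
      apply Subtype.ext
      rw [sig_app hanti hsymm hnx, sig_app hanti hsymm hny, hLy, hLx,
        ← mul_assoc, ← mul_assoc, trOf_comm hxy]

end Action

end PCM

namespace PCM

variable {A : Type*}

section GroupSide

variable {θ : A → A → Prop}

lemma gOf_commute {a b : A} (hab : θ a b) : Commute (gOf θ a) (gOf θ b) := by
  have hmem : FreeGroup.of a * FreeGroup.of b * (FreeGroup.of a)⁻¹ * (FreeGroup.of b)⁻¹
      ∈ pcRels θ := ⟨a, b, hab, rfl⟩
  have h1 : PresentedGroup.mk (pcRels θ)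
      (FreeGroup.of a * FreeGroup.of b * (FreeGroup.of a)⁻¹ * (FreeGroup.of b)⁻¹) = 1 :=
    (QuotientGroup.eq_one_iff _).mpr (Subgroup.subset_normalClosure hmem)
  simp only [map_mul, map_inv] at h1
  have h2 : gOf θ a * gOf θ b * (gOf θ a)⁻¹ = gOf θ b := by
    rwa [mul_inv_eq_one] at h1
  exact mul_inv_eq_iff_eq_mul.mp h2

variable (hanti : ∀ a, ¬ θ a a) (hsymm : ∀ a b, θ a b → θ b a)
include hanti hsymm

/-- the homomorphism from `F(A,θ)` to permutations of normal forms -/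
noncomputable def psi : PCGroup A θ →* Equiv.Perm (NFT θ) :=
  PresentedGroup.toGroup (f := fun a => sigE hanti hsymm (Sum.inl a)) (by
    rintro r ⟨a, b, hab, rfl⟩
    simp only [map_mul, map_inv, FreeGroup.lift_apply_of]
    have hcomm : sigE hanti hsymm (Sum.inl a) * sigE hanti hsymm (Sum.inl b) =
        sigE hanti hsymm (Sum.inl b) * sigE hanti hsymm (Sum.inl a) := by
      apply Equiv.ext
      intro t
      exact sig_comm hanti hsymm (show tilde θ (Sum.inl a) (Sum.inl b) from hab) t
    rw [hcomm]
    group)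

variable {s : Trace (A ⊕ A) (tilde θ) →* PCGroup A θ} (hs : IsSection θ s)

include hs

lemma psi_s_trOf (x : A ⊕ A) :
    psi hanti hsymm (s (trOf (tilde θ) x)) = sigE hanti hsymm x := by
  cases x with
  | inl a =>
    rw [hs.1 a]
    exact PresentedGroup.toGroup.of _
  | inr a =>
    rw [hs.2 a, map_inv]
    rw [show psi hanti hsymm (gOf θ a) = sigE hanti hsymm (Sum.inl a) from
      PresentedGroup.toGroup.of _]
    exact sigE_inv hanti hsymm (Sum.inl a)

/-- applying `ψ(s t)` to the empty trace recovers `t`, for `t` in normal form -/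
lemma psi_apply_one :
    ∀ l : List (A ⊕ A), ∀ h : NF (tr (tilde θ) l),
      psi hanti hsymm (s (tr (tilde θ) l)) ⟨1, NF_one⟩ = ⟨tr (tilde θ) l, h⟩ := by
  intro l
  induction l with
  | nil =>
    intro h
    simp only [tr_nil, map_one]
    rfl
  | cons a l ih =>
    intro h
    have hl : NF (tr (tilde θ) l) := by
      rw [tr_cons] at h
      exact h.of_mul_left
    apply Subtype.ext
    have hno : ¬ ∃ v, (⟨tr (tilde θ) l, hl⟩ : NFT θ).1 = trOf (tilde θ) (bar a) * v := by
      rintro ⟨v, hv⟩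
      refine h ⟨1, a, v, ?_⟩
      rw [tr_cons, one_mul]
      simp only at hv
      rw [hv]
    calc (psi hanti hsymm (s (tr (tilde θ) (a :: l))) ⟨1, NF_one⟩).1
        = (sig hanti hsymm a ⟨tr (tilde θ) l, hl⟩).1 := by
          erw [tr_cons, map_mul, map_mul, Equiv.Perm.mul_apply, ih hl,
            psi_s_trOf hanti hsymm hs, sigE_apply]
      _ = trOf (tilde θ) a * tr (tilde θ) l := sig_app hanti hsymm hno
      _ = tr (tilde θ) (a :: l) := (tr_cons a l).symm

omit hs in
lemma sig_tlen (x : A ⊕ A) (u : NFT θ) :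
    tlen (sig hanti hsymm x u).1 ≤ tlen u.1 + 1 := by
  by_cases h : ∃ v, u.1 = trOf (tilde θ) (bar x) * v
  · obtain ⟨v, hv⟩ := h
    rw [sig_cancel hanti hsymm hv]
    have := congrArg tlen hv
    simp at this
    omega
  · rw [sig_app hanti hsymm h]
    simp
    omega

lemma psi_tlen :
    ∀ l : List (A ⊕ A), ∀ u : NFT θ,
      tlen (psi hanti hsymm (s (tr (tilde θ) l)) u).1 ≤ tlen u.1 + l.length := by
  intro l
  induction l with
  | nil => intro u; simp
  | cons a l ih =>
    intro u
    rw [tr_cons, map_mul, map_mul, Equiv.Perm.mul_apply, psi_s_trOf hanti hsymm hs,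
      sigE_apply]
    calc tlen (sig hanti hsymm a (psi hanti hsymm (s (tr (tilde θ) l)) u)).1
        ≤ tlen (psi hanti hsymm (s (tr (tilde θ) l)) u).1 + 1 :=
          sig_tlen hanti hsymm a _
      _ ≤ tlen u.1 + l.length + 1 := by have := ih u; omega
      _ = tlen u.1 + (a :: l).length := by simp [List.length_cons]; ring

/-- normal form traces are geodesic: they have minimal length in their fiber -/
lemma nf_geodesic {t t' : Trace (A ⊕ A) (tilde θ)} (hnf : NF t)
    (heq : s t' = s t) : tlen t ≤ tlen t' := by
  obtain ⟨l, rfl⟩ := tr_surjective t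
  obtain ⟨l', rfl⟩ := tr_surjective t'
  have h1 := psi_apply_one hanti hsymm hs l hnf
  have h2 := psi_tlen hanti hsymm hs l' (⟨1, NF_one⟩ : NFT θ)
  rw [← heq] at h1
  rw [h1] at h2
  simpa using h2

/-- normal form traces are reduced -/
lemma nf_reduced {t : Trace (A ⊕ A) (tilde θ)} (hnf : NF t) : ReducedWrt θ s t := by
  intro t' n n' heq hn hn'
  rw [hasLen_iff] at hn hn'
  subst hn hn'
  exact nf_geodesic hanti hsymm hs hnf heq

end GroupSide

end PCM

namespace PCM

variable {A : Type*}

section Del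

variable {X : Type*} {φ : X → X → Prop}

open scoped Classical

/-- delete all occurrences of the letter `c` -/
noncomputable def delT (c : X) : Trace X φ →* Trace X φ :=
  traceLift (fun a => if a = c then 1 else trOf φ a) (by
    intro a b hab
    by_cases ha : a = c
    · simp [ha, Commute.one_left]
    · by_cases hb : b = c
      · simp [ha, hb, Commute.one_right]
      · simp only [if_neg ha, if_neg hb]
        exact trOf_comm hab)

@[simp] lemma delT_trOf_self (c : X) : delT c (trOf φ c) = 1 := by
  simp [delT]

lemma delT_trOf_ne {a c : X} (h : a ≠ c) : delT c (trOf φ a) = trOf φ a := by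
  simp [delT, h]

lemma delT_eq_self {c : X} {l : List X} (h : ∀ y ∈ l, y ≠ c) :
    delT c (tr φ l) = tr φ l := by
  induction l with
  | nil => simp
  | cons a l ih =>
    rw [tr_cons, map_mul, delT_trOf_ne (h a (List.mem_cons_self)),
      ih fun y hy => h y (List.mem_cons_of_mem a hy)]

end Del

section Main

variable {θ : A → A → Prop} (hanti : ∀ a, ¬ θ a a) (hsymm : ∀ a b, θ a b → θ b a)
  (B : Set A) {s : Trace (A ⊕ A) (tilde θ) →* PCGroup A θ} (hs : IsSection θ s)

include hanti hsymm hs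

omit hanti hsymm in
lemma s_mul_bar (x : A ⊕ A) :
    s (trOf (tilde θ) x) * s (trOf (tilde θ) (bar x)) = 1 := by
  cases x with
  | inl a =>
    rw [hs.1, show bar (Sum.inl a) = Sum.inr a from rfl, hs.2, mul_inv_cancel]
  | inr a =>
    rw [hs.2, show bar (Sum.inr a) = Sum.inl a from rfl, hs.1, inv_mul_cancel]

omit hanti in
lemma commute_s_gOf {z : A} {x : A ⊕ A} (h : θ (unbar x) z) :
    Commute (gOf θ z) (s (trOf (tilde θ) x)) := by
  cases x with
  | inl a => rw [hs.1]; exact gOf_commute (hsymm _ _ h)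
  | inr a => rw [hs.2]; exact (gOf_commute (hsymm _ _ h)).inv_right

/-- THE core lemma: any `B̃`-conjugate of a generator from `Z` lies in the
subgroup generated by `ρ_Z(B)`. -/
lemma main_conj :
    ∀ n (wl : List (A ⊕ A)) (z : A), wl.length = n → z ∉ B →
      (∀ x ∈ wl, unbar x ∈ B) →
      (s (tr (tilde θ) wl))⁻¹ * gOf θ z * s (tr (tilde θ) wl) ∈
        Subgroup.closure (rhoSet θ B s) := by
  have hirr := tilde_irr (θ := θ) hanti
  have hsym := tilde_symm (θ := θ) hsymm
  intro n
  induction n using Nat.strong_induction_on with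
  | _ n ih =>
    intro wl z hlen hzB hwB
    by_cases hpair : HasPairT (tr (tilde θ) wl)
    · -- Case A : cancel a pair inside w
      obtain ⟨p, x, q, hd⟩ := hpair
      obtain ⟨lp, rfl⟩ := tr_surjective p
      obtain ⟨lq, rfl⟩ := tr_surjective q
      have hcnt : (wl : Multiset (A ⊕ A)) = ↑lp + ({x} + ({bar x} + ↑lq)) := by
        have := congrArg cnt hd
        simpa using this
      have hlen2 : wl.length = lp.length + lq.length + 2 := by
        have := congrArg Multiset.card hcnt
        simp at this; omega
      have hmem : ∀ y ∈ lp ++ lq, unbar y ∈ B := by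
        intro y hy
        apply hwB
        rw [← Multiset.mem_coe, hcnt]
        simp only [Multiset.mem_add, Multiset.mem_coe, Multiset.mem_singleton]
        rcases List.mem_append.mp hy with h | h
        · exact Or.inl h
        · exact Or.inr (Or.inr (Or.inr h))
      have hseq : s (tr (tilde θ) wl) = s (tr (tilde θ) (lp ++ lq)) := by
        rw [hd, tr_append, map_mul, map_mul, map_mul, map_mul,
          ← mul_assoc (s (trOf (tilde θ) x)), s_mul_bar hs x, one_mul]
      rw [hseq]
      exact ih (lp ++ lq).length (by simp [List.length_append] at *; omega)
        (lp ++ lq) z rfl hzB hmem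
    · by_cases hIA :
          IA (tilde θ) (trOf (tilde θ) (Sum.inl z) * tr (tilde θ) wl) = {Sum.inl z}
      · -- Case C : the trace is already in β_Z^R(B̃)
        apply Subgroup.subset_closure
        have hNF : NF (trOf (tilde θ) (Sum.inl z) * tr (tilde θ) wl) := by
          rintro ⟨p, x, q, hd⟩
          have hcnt : Sum.inl z ::ₘ (wl : Multiset (A ⊕ A)) =
              cnt p + ({x} + ({bar x} + cnt q)) := by
            have := congrArg cnt hd
            simpa using this
          have hmem : ∀ y : A ⊕ A, y ∈ Sum.inl z ::ₘ (wl : Multiset (A ⊕ A)) →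
              y = Sum.inl z ∨ unbar y ∈ B := by
            intro y hy
            rcases Multiset.mem_cons.mp hy with h | h
            · exact Or.inl h
            · exact Or.inr (hwB y (Multiset.mem_coe.mp h))
          have hx : x = Sum.inl z ∨ unbar x ∈ B := by
            apply hmem; rw [hcnt]; simp
          have hbx : bar x = Sum.inl z ∨ unbar (bar x) ∈ B := by
            apply hmem; rw [hcnt]; simp
          have hxne : x ≠ Sum.inl z := by
            rintro rfl
            rcases hbx with h | h
            · exact absurd h (by simp [bar])
            · rw [unbar_bar] at h; exact hzB h
          have hbxne : bar x ≠ Sum.inl z := by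
            rintro hb
            rcases hx with h | h
            · exact hxne h
            · rw [← unbar_bar, hb] at h; exact hzB h
          apply hpair
          have hD : delT (Sum.inl z) (trOf (tilde θ) (Sum.inl z) * tr (tilde θ) wl)
              = tr (tilde θ) wl := by
            rw [map_mul, delT_trOf_self, one_mul, delT_eq_self]
            intro y hy
            rintro rfl
            exact hzB (hwB _ hy)
          refine ⟨delT (Sum.inl z) p, x, delT (Sum.inl z) q, ?_⟩
          rw [← hD, hd, map_mul, map_mul, map_mul, delT_trOf_ne hxne,
            delT_trOf_ne hbxne]
        refine ⟨z, hzB, wl, hwB, ?_, ?_, rfl⟩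
        · rw [show trMk (tilde θ) (FreeMonoid.ofList (Sum.inl z :: wl)) =
            trOf (tilde θ) (Sum.inl z) * tr (tilde θ) wl from tr_cons _ _]
          exact hIA
        · rw [show trMk (tilde θ) (FreeMonoid.ofList (Sum.inl z :: wl)) =
            trOf (tilde θ) (Sum.inl z) * tr (tilde θ) wl from tr_cons _ _]
          exact nf_reduced hanti hsymm hs hNF
      · -- Case B : commute an initial letter of w across z
        have hzIA : Sum.inl z ∈
            IA (tilde θ) (trOf (tilde θ) (Sum.inl z) * tr (tilde θ) wl) :=
          ⟨tr (tilde θ) wl, rfl⟩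
        have hnsub : ¬ (IA (tilde θ) (trOf (tilde θ) (Sum.inl z) * tr (tilde θ) wl)
            ⊆ {Sum.inl z}) := by
          intro hsub
          exact hIA (Set.Subset.antisymm hsub (by
            intro y hy
            rcases hy with rfl
            exact hzIA))
        obtain ⟨x, hxIA, hxne⟩ := Set.not_subset.mp hnsub
        obtain ⟨u, hu⟩ := hxIA
        obtain ⟨hφ, r, hr1, hr2⟩ := heads_comm hirr hsym
          (fun h => hxne (Set.mem_singleton_iff.mpr h)) hu
        obtain ⟨lr, rfl⟩ := tr_surjective r
        have hcnt : (wl : Multiset (A ⊕ A)) = {x} + ↑lr := by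
          have := congrArg cnt hr1
          simpa using this
        have hxw : x ∈ wl := by
          rw [← Multiset.mem_coe, hcnt]; simp
        have hlen2 : wl.length = lr.length + 1 := by
          have := congrArg Multiset.card hcnt
          simpa using this
        have hmem : ∀ y ∈ lr, unbar y ∈ B := by
          intro y hy
          apply hwB
          rw [← Multiset.mem_coe, hcnt]
          simp only [Multiset.mem_add, Multiset.mem_coe, Multiset.mem_singleton]
          exact Or.inr hy
        have hc : Commute (gOf θ z) (s (trOf (tilde θ) x)) :=
          commute_s_gOf hsymm hs (show θ (unbar x) z from hφ)
        have h1 : (s (trOf (tilde θ) x))⁻¹ * gOf θ z * s (trOf (tilde θ) x)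
            = gOf θ z := by
          rw [mul_assoc, hc.eq, ← mul_assoc, inv_mul_cancel, one_mul]
        have key : (s (tr (tilde θ) wl))⁻¹ * gOf θ z * s (tr (tilde θ) wl)
            = (s (tr (tilde θ) lr))⁻¹ * gOf θ z * s (tr (tilde θ) lr) := by
          rw [hr1, map_mul]
          rw [show (s (trOf (tilde θ) x) * s (tr (tilde θ) lr))⁻¹ * gOf θ z *
              (s (trOf (tilde θ) x) * s (tr (tilde θ) lr))
              = (s (tr (tilde θ) lr))⁻¹ *
                ((s (trOf (tilde θ) x))⁻¹ * gOf θ z * s (trOf (tilde θ) x)) *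
                s (tr (tilde θ) lr) by group, h1]
        rw [key]
        exact ih lr.length (by omega) lr z rfl hzB hmem

end Main

end PCM

namespace PCM

variable {A : Type*}

section Retr

open scoped Classical

variable (θ : A → A → Prop) (B : Set A)

/-- retraction of `F(A,θ)` onto the subgroup generated by `B`, killing `Z` -/
noncomputable def retr : PCGroup A θ →* PCGroup A θ :=
  PresentedGroup.toGroup (f := fun a => if a ∈ B then gOf θ a else 1) (by
    rintro r ⟨a, b, hab, rfl⟩
    simp only [map_mul, map_inv, FreeGroup.lift_apply_of]
    by_cases ha : a ∈ B <;> by_cases hb : b ∈ B <;>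
      simp only [if_pos, if_neg, ha, hb, if_true, if_false]
    · rw [(gOf_commute hab).eq]; group
    · group
    · group
    · group)

lemma retr_gOf (a : A) : retr θ B (gOf θ a) = if a ∈ B then gOf θ a else 1 :=
  PresentedGroup.toGroup.of _

end Retr

/-- the two-sided conjugation stabilizer of a subgroup -/
def conjStab {G : Type*} [Group G] (K : Subgroup G) : Subgroup G where
  carrier := {g | ∀ n ∈ K, g * n * g⁻¹ ∈ K ∧ g⁻¹ * n * g ∈ K}
  one_mem' := by simp
  mul_mem' := by
    intro a b ha hb n hn
    constructor
    · have h2 := (ha _ (hb n hn).1).1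
      rw [show a * b * n * (a * b)⁻¹ = a * (b * n * b⁻¹) * a⁻¹ by group]
      exact h2
    · have h2 := (hb _ (ha n hn).2).2
      rw [show (a * b)⁻¹ * n * (a * b) = b⁻¹ * (a⁻¹ * n * a) * b by group]
      exact h2
  inv_mem' := by
    intro a ha n hn
    constructor
    · have := (ha n hn).2
      simpa using this
    · have := (ha n hn).1
      simpa using this

end PCM

open PCM in
/-- `F(A,θ) = F(B,θ_B) ⋉ H_Z` where `H_Z` is the normal closure of
`Z`, and `H_Z` is generated by `ρ_Z(B) = {w⁻¹zw : zw ∈ β_Z^R(B̃)}`. -/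
theorem stmt_13 {A : Type*} (θ : A → A → Prop)
    (hanti : ∀ a, ¬ θ a a) (hsymm : ∀ a b, θ a b → θ b a) (B : Set A)
    (s : Trace (A ⊕ A) (tilde θ) →* PCGroup A θ) (hs : IsSection θ s) :
    (Subgroup.normalClosure (gOf θ '' {a | a ∉ B})).Normal ∧
    Subgroup.closure (gOf θ '' B) ⊓ Subgroup.normalClosure (gOf θ '' {a | a ∉ B}) = ⊥ ∧
    Subgroup.closure (gOf θ '' B) ⊔ Subgroup.normalClosure (gOf θ '' {a | a ∉ B}) = ⊤ ∧
    Subgroup.normalClosure (gOf θ '' {a | a ∉ B}) = Subgroup.closure (rhoSet θ B s) := by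
  set N := Subgroup.normalClosure (gOf θ '' {a | a ∉ B}) with hN
  set K := Subgroup.closure (rhoSet θ B s) with hK
  -- the main lemma, restated
  have hmain : ∀ (wl : List (A ⊕ A)) (z : A), z ∉ B → (∀ x ∈ wl, unbar x ∈ B) →
      (s (tr (tilde θ) wl))⁻¹ * gOf θ z * s (tr (tilde θ) wl) ∈ K := by
    intro wl z hz hw
    exact main_conj hanti hsymm B hs wl.length wl z rfl hz hw
  have hgz : ∀ z ∉ B, gOf θ z ∈ K := by
    intro z hz
    have := hmain [] z hz (by simp)
    simpa using this
  refine ⟨Subgroup.normalClosure_normal, ?_, ?_, ?_⟩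
  · -- trivial intersection, via the retraction
    rw [eq_bot_iff]
    rintro g ⟨hgB, hgN⟩
    have hid : retr θ B g = g := by
      refine Subgroup.closure_induction ?_ ?_ ?_ ?_ hgB
      · rintro x ⟨a, ha, rfl⟩
        rw [retr_gOf, if_pos ha]
      · exact map_one _
      · intro x y _ _ hx hy
        rw [map_mul, hx, hy]
      · intro x _ hx
        rw [map_inv, hx]
    have hker : N ≤ (retr θ B).ker := by
      apply Subgroup.normalClosure_le_normal
      rintro x ⟨a, ha, rfl⟩
      simp only [SetLike.mem_coe, MonoidHom.mem_ker]
      rw [retr_gOf, if_neg ha]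
    have : retr θ B g = 1 := hker hgN
    rw [Subgroup.mem_bot, ← hid, this]
  · -- join is everything
    rw [eq_top_iff, ← PresentedGroup.closure_range_of (pcRels θ)]
    apply Subgroup.closure_le _ |>.mpr
    rintro x ⟨a, rfl⟩
    by_cases ha : a ∈ B
    · exact Subgroup.mem_sup_left (Subgroup.subset_closure ⟨a, ha, rfl⟩)
    · exact Subgroup.mem_sup_right (Subgroup.subset_normalClosure ⟨a, ha, rfl⟩)
  · -- N = K
    have hKN : K ≤ N := by
      rw [hK]
      apply Subgroup.closure_le _ |>.mpr
      rintro g ⟨z, hz, wl, hw, hIA', hred, rfl⟩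
      have hzN : gOf θ z ∈ N := Subgroup.subset_normalClosure ⟨z, hz, rfl⟩
      have := Subgroup.Normal.conj_mem (Subgroup.normalClosure_normal) _ hzN
        (s (trMk (tilde θ) (FreeMonoid.ofList wl)))⁻¹
      simpa using this
    -- K is normal
    have hstab : ∀ g : PCGroup A θ, g ∈ conjStab K := by
      intro g
      apply PresentedGroup.generated_by
      intro a
      by_cases ha : a ∈ B
      · -- conjugation by letters of B
        intro n hn
        constructor
        · refine Subgroup.closure_induction ?_ ?_ ?_ ?_ hn
          · rintro x ⟨z, hz, wl, hw, -, -, rfl⟩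
            have hmem := hmain (wl ++ [Sum.inr a]) z hz (by
              intro x hx
              rcases List.mem_append.mp hx with h | h
              · exact hw x h
              · simp only [List.mem_singleton] at h
                subst h
                simpa [unbar] using ha)
            have heq : s (tr (tilde θ) (wl ++ [Sum.inr a])) =
                s (trMk (tilde θ) (FreeMonoid.ofList wl)) * (gOf θ a)⁻¹ := by
              rw [tr_append, map_mul, tr_singleton, hs.2]
              rfl
            rw [heq] at hmem
            have : PresentedGroup.of (rels := pcRels θ) a *
                ((s (trMk (tilde θ) (FreeMonoid.ofList wl)))⁻¹ * gOf θ z *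
                  s (trMk (tilde θ) (FreeMonoid.ofList wl))) *
                (PresentedGroup.of (rels := pcRels θ) a)⁻¹ =
                (s (trMk (tilde θ) (FreeMonoid.ofList wl)) * (gOf θ a)⁻¹)⁻¹ *
                  gOf θ z *
                  (s (trMk (tilde θ) (FreeMonoid.ofList wl)) * (gOf θ a)⁻¹) := by
              show gOf θ a * _ * (gOf θ a)⁻¹ = _
              group
            rw [this]
            exact hmem
          · simpa using one_mem K
          · intro x y _ _ hx hy
            have : PresentedGroup.of (rels := pcRels θ) a * (x * y) *
                (PresentedGroup.of (rels := pcRels θ) a)⁻¹ =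
                (PresentedGroup.of (rels := pcRels θ) a * x *
                  (PresentedGroup.of (rels := pcRels θ) a)⁻¹) *
                (PresentedGroup.of (rels := pcRels θ) a * y *
                  (PresentedGroup.of (rels := pcRels θ) a)⁻¹) := by group
            rw [this]
            exact mul_mem hx hy
          · intro x _ hx
            have : PresentedGroup.of (rels := pcRels θ) a * x⁻¹ *
                (PresentedGroup.of (rels := pcRels θ) a)⁻¹ =
                (PresentedGroup.of (rels := pcRels θ) a * x *
                  (PresentedGroup.of (rels := pcRels θ) a)⁻¹)⁻¹ := by group
            rw [this]
            exact inv_mem hx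
        · refine Subgroup.closure_induction ?_ ?_ ?_ ?_ hn
          · rintro x ⟨z, hz, wl, hw, -, -, rfl⟩
            have hmem := hmain (wl ++ [Sum.inl a]) z hz (by
              intro x hx
              rcases List.mem_append.mp hx with h | h
              · exact hw x h
              · simp only [List.mem_singleton] at h
                subst h
                simpa [unbar] using ha)
            have heq : s (tr (tilde θ) (wl ++ [Sum.inl a])) =
                s (trMk (tilde θ) (FreeMonoid.ofList wl)) * gOf θ a := by
              rw [tr_append, map_mul, tr_singleton, hs.1]
              rfl
            rw [heq] at hmem
            have : (PresentedGroup.of (rels := pcRels θ) a)⁻¹ *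
                ((s (trMk (tilde θ) (FreeMonoid.ofList wl)))⁻¹ * gOf θ z *
                  s (trMk (tilde θ) (FreeMonoid.ofList wl))) *
                PresentedGroup.of (rels := pcRels θ) a =
                (s (trMk (tilde θ) (FreeMonoid.ofList wl)) * gOf θ a)⁻¹ *
                  gOf θ z *
                  (s (trMk (tilde θ) (FreeMonoid.ofList wl)) * gOf θ a) := by
              show (gOf θ a)⁻¹ * _ * gOf θ a = _
              group
            rw [this]
            exact hmem
          · simpa using one_mem K
          · intro x y _ _ hx hy
            have : (PresentedGroup.of (rels := pcRels θ) a)⁻¹ * (x * y) *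
                PresentedGroup.of (rels := pcRels θ) a =
                ((PresentedGroup.of (rels := pcRels θ) a)⁻¹ * x *
                  PresentedGroup.of (rels := pcRels θ) a) *
                ((PresentedGroup.of (rels := pcRels θ) a)⁻¹ * y *
                  PresentedGroup.of (rels := pcRels θ) a) := by group
            rw [this]
            exact mul_mem hx hy
          · intro x _ hx
            have : (PresentedGroup.of (rels := pcRels θ) a)⁻¹ * x⁻¹ *
                PresentedGroup.of (rels := pcRels θ) a =
                ((PresentedGroup.of (rels := pcRels θ) a)⁻¹ * x *
                  PresentedGroup.of (rels := pcRels θ) a)⁻¹ := by group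
            rw [this]
            exact inv_mem hx
      · -- conjugation by letters of Z : they lie in K
        have hzK : PresentedGroup.of (rels := pcRels θ) a ∈ K := hgz a ha
        intro n hn
        exact ⟨mul_mem (mul_mem hzK hn) (inv_mem hzK),
          mul_mem (mul_mem (inv_mem hzK) hn) hzK⟩
    haveI hKnormal : K.Normal := ⟨by
      intro n hn g
      exact ((hstab g) n hn).1⟩
    have hNK : N ≤ K := by
      apply Subgroup.normalClosure_le_normal
      rintro x ⟨z, hz, rfl⟩
      exact hgz z hz
    exact le_antisymm hNK hKN
end

section
/- Let A be an alphabet, θ an independence relation, B ⊆ A, z ∈ A − B, and w ∈ red(B̃, θ̃_{B̃}) a reduced trace over B̃. Then the trace w̄·z·w is reduced (belongs to red(Ã,θ̃)) if and only if z·w ∈ β_Z(B̃), i.e. IA(z·w) = {z}. -/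
namespace Stmt16

open Relation

variable {X : Type*}

/-- `Del θ x l m` : `l` contains an occurrence of `x` whose prefix commutes with `x`,
and `m` is `l` with that occurrence deleted. -/
inductive Del (θ : X → X → Prop) (x : X) : List X → List X → Prop
  | head (w) : Del θ x (x :: w) w
  | step {c l m} (h : θ c x) (hd : Del θ x l m) : Del θ x (c :: l) (c :: m)

/-- `NR θ bar l` : the word `l` is not reduced. -/
inductive NR (θ : X → X → Prop) (bar : X → X) : List X → Prop
  | here {x l m} (hd : Del θ (bar x) l m) : NR θ bar (x :: l)
  | there (x) {l} (h : NR θ bar l) : NR θ bar (x :: l)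

/-- Swap of two adjacent independent letters. -/
inductive Sw (θ : X → X → Prop) : List X → List X → Prop
  | head {x y} (t) (h : θ x y) : Sw θ (x :: y :: t) (y :: x :: t)
  | cons (c) {l l'} (h : Sw θ l l') : Sw θ (c :: l) (c :: l')

variable {θ : X → X → Prop} {bar : X → X} {x y z w c : X} {l l' m m' m₂ l₂ : List X}

theorem Del.length_eq (h : Del θ x l m) : l.length = m.length + 1 := by
  induction h with
  | head w => simp
  | step h hd ih => simp [ih]

theorem Del.mem_of (h : Del θ x l m) : x ∈ l := by
  induction h with
  | head w => simp
  | step h hd ih => simp [ih]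

theorem Del.det (hirr : ∀ a, ¬ θ a a) (h1 : Del θ x l m) (h2 : Del θ x l m') : m = m' := by
  induction h1 generalizing m' with
  | head w =>
    cases h2 with
    | head => rfl
    | step h hd => exact absurd h (hirr _)
  | step h hd ih =>
    cases h2 with
    | head => exact absurd h (hirr _)
    | step h' hd' => rw [ih hd']

theorem Del.of_comm {u v : List X} (h : ∀ e ∈ u, θ e x) : Del θ x (u ++ x :: v) (u ++ v) := by
  induction u with
  | nil => exact Del.head v
  | cons c u ih => exact Del.step (h c (by simp)) (ih fun e he => h e (by simp [he]))

theorem Del.dest (h : Del θ x l m) :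
    ∃ u v, l = u ++ x :: v ∧ m = u ++ v ∧ ∀ e ∈ u, θ e x := by
  induction h with
  | head w => exact ⟨[], w, rfl, rfl, by simp⟩
  | step h hd ih =>
    obtain ⟨u, v, rfl, rfl, hc⟩ := ih
    refine ⟨_ :: u, v, rfl, rfl, ?_⟩
    rintro e he
    rcases List.mem_cons.1 he with rfl | he
    · exact h
    · exact hc e he

theorem Del.diamond (hzw : z ≠ w) (h1 : Del θ z l m) :
    ∀ {l₂}, Del θ w l l₂ → ∃ m₂, Del θ w m m₂ ∧ Del θ z l₂ m₂ := by
  induction h1 with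
  | head t =>
    intro l₂ h2
    cases h2 with
    | head => exact absurd rfl hzw
    | step h hd => exact ⟨_, hd, Del.head _⟩
  | step hc hd ih =>
    intro l₂ h2
    cases h2 with
    | head => exact ⟨_, Del.head _, hd⟩
    | step hc' hd' =>
      obtain ⟨m₂, ha, hb⟩ := ih hd'
      exact ⟨_ :: m₂, Del.step hc' ha, Del.step hc hb⟩

theorem Del.exists_comm (hyz : θ y z) (h1 : Del θ y l m) :
    ∀ {m₂}, Del θ z m m₂ → ∃ l₂, Del θ z l l₂ := by
  induction h1 with
  | head t => exact fun h2 => ⟨y :: _, Del.step hyz h2⟩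
  | step hc hd ih =>
    intro m₂ h2
    cases h2 with
    | head => exact ⟨_, Del.head _⟩
    | step hc' hd' =>
      obtain ⟨l₂, hl₂⟩ := ih hd'
      exact ⟨_ :: l₂, Del.step hc' hl₂⟩

theorem Del.split {p : List X} (hd : Del θ z (p ++ l) m) :
    (∃ p', Del θ z p p' ∧ m = p' ++ l) ∨
      ((∀ e ∈ p, θ e z) ∧ ∃ m', Del θ z l m' ∧ m = p ++ m') := by
  induction p generalizing m with
  | nil => exact .inr ⟨by simp, m, hd, rfl⟩
  | cons c p ih =>
    cases hd with
    | head => exact .inl ⟨p, Del.head p, rfl⟩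
    | step hc hd1 =>
      rcases ih hd1 with ⟨p', hp', rfl⟩ | ⟨hcm, m', hm', rfl⟩
      · exact .inl ⟨c :: p', Del.step hc hp', rfl⟩
      · refine .inr ⟨?_, m', hm', rfl⟩
        rintro e he
        rcases List.mem_cons.1 he with rfl | he
        · exact hc
        · exact hcm e he

theorem NR.of_del (hsy : ∀ a b, θ a b → θ b a) (hbar : ∀ a b, θ a b → θ (bar a) b)
    (h : Del θ y l m) : NR θ bar m → NR θ bar l := by
  induction h with
  | head t => exact fun hm => NR.there _ hm
  | step hc hd ih =>
    intro hm
    cases hm with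
    | here hd₂ =>
      obtain ⟨l₂, hl₂⟩ := Del.exists_comm (hsy _ _ (hbar _ _ hc)) hd hd₂
      exact NR.here hl₂
    | there _ hm₁ => exact NR.there _ (ih hm₁)

theorem NR.del_bar (hsy : ∀ a b, θ a b → θ b a) (hx : ∀ a, ¬ θ a (bar a))
    (h : Del θ y l m) : ∀ {m₂}, Del θ (bar y) m m₂ → NR θ bar l := by
  induction h with
  | head t => exact fun h2 => NR.here h2
  | step hc hd ih =>
    intro m₂ h2
    cases h2 with
    | head => exact absurd (hsy _ _ hc) (hx _)
    | step hc' hd' => exact NR.there _ (ih hd')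

theorem Sw.symm' (hsy : ∀ a b, θ a b → θ b a) (h : Sw θ l l') : Sw θ l' l := by
  induction h with
  | head t h => exact Sw.head t (hsy _ _ h)
  | cons c h ih => exact Sw.cons c ih

theorem Sw.del (hsy : ∀ a b, θ a b → θ b a) (hsw : Sw θ l l') :
    ∀ {m}, Del θ z l m → ∃ m', Del θ z l' m' ∧ ReflTransGen (Sw θ) m m' := by
  induction hsw with
  | head t h =>
    intro m hd
    cases hd with
    | head => exact ⟨_, Del.step (hsy _ _ h) (Del.head t), .refl⟩
    | step h1 hd1 =>
      cases hd1 with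
      | head => exact ⟨_, Del.head _, .refl⟩
      | step h2 hd2 => exact ⟨_, Del.step h2 (Del.step h1 hd2), .single (Sw.head _ h)⟩
  | cons c hsw ih =>
    intro m hd
    cases hd with
    | head => exact ⟨_, Del.head _, .single hsw⟩
    | step h1 hd1 =>
      obtain ⟨m', hm', hr⟩ := ih hd1
      exact ⟨c :: m', Del.step h1 hm', ReflTransGen.lift _ (fun a b hab => Sw.cons c hab) _ _ hr⟩

theorem Sws.del (hsy : ∀ a b, θ a b → θ b a) (hsw : ReflTransGen (Sw θ) l l') :
    ∀ {m}, Del θ z l m → ∃ m', Del θ z l' m' ∧ ReflTransGen (Sw θ) m m' := by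
  induction hsw with
  | refl => exact fun hd => ⟨_, hd, .refl⟩
  | tail hab hbc ih =>
    intro m hd
    obtain ⟨m₁, h₁, hr₁⟩ := ih hd
    obtain ⟨m₂, h₂, hr₂⟩ := Sw.del hsy hbc h₁
    exact ⟨m₂, h₂, hr₁.trans hr₂⟩

theorem Sws.symm' (hsy : ∀ a b, θ a b → θ b a) (h : ReflTransGen (Sw θ) l l') :
    ReflTransGen (Sw θ) l' l :=
  by haveI : Std.Symm (Sw θ) := ⟨fun _ _ hab => Sw.symm' hsy hab⟩; exact Std.Symm.symm _ _ h

theorem NR.sw (hsy : ∀ a b, θ a b → θ b a) (hbar : ∀ a b, θ a b → θ (bar a) b)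
    (hx : ∀ a, ¬ θ a (bar a)) (hsw : Sw θ l l') : NR θ bar l → NR θ bar l' := by
  induction hsw with
  | head t h =>
    intro hnr
    cases hnr with
    | here hd =>
      cases hd with
      | head => exact absurd h (hx _)
      | step h1 hd1 => exact NR.there _ (NR.here hd1)
    | there _ hnr1 =>
      cases hnr1 with
      | here hd => exact NR.here (Del.step (hsy _ _ (hbar _ _ (hsy _ _ h))) hd)
      | there _ hnr2 => exact NR.there _ (NR.there _ hnr2)
  | cons c hsw ih =>
    intro hnr
    cases hnr with
    | here hd =>
      obtain ⟨m', hm', _⟩ := Sw.del hsy hsw hd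
      exact NR.here hm'
    | there _ h1 => exact NR.there _ (ih h1)

theorem NR.sws (hsy : ∀ a b, θ a b → θ b a) (hbar : ∀ a b, θ a b → θ (bar a) b)
    (hx : ∀ a, ¬ θ a (bar a)) (hsw : ReflTransGen (Sw θ) l l') :
    NR θ bar l → NR θ bar l' := by
  induction hsw with
  | refl => exact id
  | tail hab hbc ih => exact fun h => NR.sw hsy hbar hx hbc (ih h)

theorem Sw.length_eq (h : Sw θ l l') : l.length = l'.length := by
  induction h with
  | head t h => simp
  | cons c h ih => simp [ih]

theorem Sws.length_eq (h : ReflTransGen (Sw θ) l l') : l.length = l'.length := by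
  induction h with
  | refl => rfl
  | tail hab hbc ih => exact ih.trans (Sw.length_eq hbc)

theorem Sw.append_right {v : List X} (h : Sw θ l l') : Sw θ (l ++ v) (l' ++ v) := by
  induction h with
  | head t h => exact Sw.head _ h
  | cons c h ih => exact Sw.cons c ih

theorem Sw.append_left {u : List X} (h : Sw θ l l') : Sw θ (u ++ l) (u ++ l') := by
  induction u with
  | nil => exact h
  | cons c u ih => exact Sw.cons c ih

theorem NR.append_left {p : List X} (h : NR θ bar l) : NR θ bar (p ++ l) := by
  induction p with
  | nil => exact h
  | cons c p ih => exact NR.there _ ih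

theorem NR_pattern {u v w : List X} (hc : ∀ e ∈ v, θ e (bar x)) :
    NR θ bar (u ++ x :: (v ++ bar x :: w)) :=
  NR.append_left (NR.here (Del.of_comm hc))

theorem NR_pattern' {u v w : List X} (hbb : ∀ a, bar (bar a) = a) (hc : ∀ e ∈ v, θ e x) :
    NR θ bar (u ++ bar x :: (v ++ x :: w)) := by
  have := NR_pattern (θ := θ) (bar := bar) (u := u) (x := bar x) (v := v) (w := w)
    (fun e he => by rw [hbb]; exact hc e he)
  rwa [hbb] at this

theorem NR.fact (h : NR θ bar l) :
    ∃ u x v w, l = u ++ x :: (v ++ bar x :: w) ∧ ∀ e ∈ v, θ e (bar x) := by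
  induction h with
  | here hd =>
    obtain ⟨v, w, rfl, _, hc⟩ := Del.dest hd
    exact ⟨[], _, v, w, rfl, hc⟩
  | there c _ ih =>
    obtain ⟨u, x, v, w, rfl, hc⟩ := ih
    exact ⟨c :: u, x, v, w, rfl, hc⟩

theorem NR_split {p : List X} (h : NR θ bar (p ++ l)) :
    NR θ bar p ∨ NR θ bar l ∨ ∃ x m, x ∈ p ∧ Del θ (bar x) l m := by
  induction p with
  | nil => exact .inr (.inl h)
  | cons c p ih =>
    cases h with
    | here hd =>
      rcases Del.split hd with ⟨p', hp', _⟩ | ⟨_, m', hm', _⟩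
      · exact .inl (NR.here hp')
      · exact .inr (.inr ⟨c, m', by simp, hm'⟩)
    | there _ h1 =>
      rcases ih h1 with h | h | ⟨x, m, hx, hd⟩
      · exact .inl (NR.there c h)
      · exact .inr (.inl h)
      · exact .inr (.inr ⟨x, m, by simp [hx], hd⟩)

theorem NR.rev (hsy : ∀ a b, θ a b → θ b a) (hbar : ∀ a b, θ a b → θ (bar a) b)
    (hbb : ∀ a, bar (bar a) = a) (h : NR θ bar (l.reverse.map bar)) : NR θ bar l := by
  obtain ⟨u, x, v, w, heq, hc⟩ := NR.fact h
  have hl : l = w.reverse.map bar ++ x :: (v.reverse.map bar ++ bar x :: u.reverse.map bar) := by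
    have h2 := congrArg (fun t : List X => (List.reverse t).map bar) heq
    simp only [List.map_reverse] at h2
    simp only [List.reverse_reverse, List.map_map] at h2
    rw [show (bar ∘ bar) = id from funext hbb, List.map_id] at h2
    rw [h2]
    simp [List.reverse_append, List.map_append, hbb, List.map_reverse]
  rw [hl]
  refine NR_pattern ?_
  intro e he
  rw [List.mem_map] at he
  obtain ⟨f, hf, rfl⟩ := he
  rw [List.mem_reverse] at hf
  exact hbar _ _ (hc f hf)

end Stmt16
namespace Stmt16

open Relation PCM

variable {X : Type*} {θ : X → X → Prop} {bar : X → X} {x y : X} {l l' m : List X}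

theorem trMk_coe (fm : FreeMonoid X) : trMk θ fm = (fm : (traceCon θ).Quotient) := rfl

theorem sw_con (hsw : Sw θ l l') :
    traceCon θ (FreeMonoid.ofList l) (FreeMonoid.ofList l') := by
  induction hsw with
  | head t h =>
    have h1 : traceCon θ (FreeMonoid.of _ * FreeMonoid.of _) (FreeMonoid.of _ * FreeMonoid.of _) :=
      ConGen.Rel.of _ _ ⟨_, _, h, rfl, rfl⟩
    exact (traceCon θ).mul h1 ((traceCon θ).refl (FreeMonoid.ofList t))
  | cons c hsw ih => exact (traceCon θ).mul ((traceCon θ).refl (FreeMonoid.of c)) ih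

theorem mk_eq_of_sws (h : ReflTransGen (Sw θ) l l') :
    trMk θ (FreeMonoid.ofList l) = trMk θ (FreeMonoid.ofList l') := by
  induction h with
  | refl => rfl
  | tail hab hbc ih => exact ih.trans (((traceCon θ).eq).mpr (sw_con hbc))

/-- The congruence of being connected by swaps. -/
def swCon (θ : X → X → Prop) (hsy : ∀ a b, θ a b → θ b a) : Con (FreeMonoid X) where
  r a b := ReflTransGen (Sw θ) a.toList b.toList
  iseqv := ⟨fun _ => .refl, fun h => Sws.symm' hsy h, fun h h' => h.trans h'⟩
  mul' := by
    intro a b c d h1 h2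
    have ha : ReflTransGen (Sw θ) (a.toList ++ c.toList) (b.toList ++ c.toList) :=
      ReflTransGen.lift (· ++ c.toList) (fun _ _ hab => Sw.append_right hab) _ _ h1
    have hb : ReflTransGen (Sw θ) (b.toList ++ c.toList) (b.toList ++ d.toList) :=
      ReflTransGen.lift (b.toList ++ ·) (fun _ _ hab => Sw.append_left hab) _ _ h2
    exact ha.trans hb

theorem sws_of_con (hsy : ∀ a b, θ a b → θ b a) {a b : FreeMonoid X}
    (h : traceCon θ a b) : ReflTransGen (Sw θ) a.toList b.toList := by
  have hle : traceCon θ ≤ swCon θ hsy := Con.conGen_le.mpr (fun u v huv => by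
    obtain ⟨p, q, hpq, rfl, rfl⟩ := huv
    exact .single (Sw.head [] hpq))
  exact hle h

theorem sws_of_mk_eq (hsy : ∀ a b, θ a b → θ b a)
    (h : trMk θ (FreeMonoid.ofList l) = trMk θ (FreeMonoid.ofList l')) :
    ReflTransGen (Sw θ) l l' :=
  sws_of_con hsy (((traceCon θ).eq).mp h)

theorem Del.sws (h : Del θ x l m) : ReflTransGen (Sw θ) l (x :: m) := by
  induction h with
  | head t => exact .refl
  | @step c l m hc hd ih =>
    have h1 := ReflTransGen.lift (c :: ·) (fun a b hab => Sw.cons c hab) _ _ ih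
    exact h1.trans (.single (Sw.head _ hc))

theorem mk_cons :
    trMk θ (FreeMonoid.ofList (x :: m)) = trOf θ x * trMk θ (FreeMonoid.ofList m) := by
  rw [FreeMonoid.ofList_cons, map_mul]; rfl

theorem mem_IA_iff (hsy : ∀ a b, θ a b → θ b a) :
    x ∈ IA θ (trMk θ (FreeMonoid.ofList l)) ↔ ∃ m, Del θ x l m := by
  constructor
  · rintro ⟨w, hw⟩
    obtain ⟨fm, rfl⟩ : ∃ fm : FreeMonoid X, trMk θ fm = w :=
      Con.induction_on w fun fm => ⟨fm, rfl⟩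
    have h2 : trMk θ (FreeMonoid.ofList l) = trMk θ (FreeMonoid.ofList (x :: fm.toList)) := by
      rw [mk_cons, hw]; rfl
    obtain ⟨m', hm', _⟩ :=
      Sws.del hsy (Sws.symm' hsy (sws_of_mk_eq hsy h2)) (Del.head fm.toList)
    exact ⟨m', hm'⟩
  · rintro ⟨m, hd⟩
    exact ⟨trMk θ (FreeMonoid.ofList m), by rw [← mk_cons]; exact mk_eq_of_sws hd.sws⟩

open scoped Classical in
/-- One step of the group action on words: cancel `bar x` if possible, else prepend `x`. -/
noncomputable def app (θ : X → X → Prop) (bar : X → X) (x : X) (l : List X) : List X :=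
  if h : ∃ m, Del θ (bar x) l m then h.choose else x :: l

theorem app_del (hirr : ∀ a, ¬ θ a a) (hd : Del θ (bar x) l m) : app θ bar x l = m := by
  rw [app, dif_pos ⟨m, hd⟩]
  exact Del.det hirr (⟨m, hd⟩ : ∃ m, Del θ (bar x) l m).choose_spec hd

theorem app_not (h : ¬ ∃ m, Del θ (bar x) l m) : app θ bar x l = x :: l := dif_neg h

theorem app_len (hirr : ∀ a, ¬ θ a a) : (app θ bar x l).length ≤ l.length + 1 := by
  by_cases h : ∃ m, Del θ (bar x) l m
  · obtain ⟨m, hd⟩ := h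
    rw [app_del hirr hd]
    have := hd.length_eq
    omega
  · rw [app_not h]; simp

theorem app_red (hsy : ∀ a b, θ a b → θ b a) (hbar : ∀ a b, θ a b → θ (bar a) b)
    (hirr : ∀ a, ¬ θ a a) (hl : ¬ NR θ bar l) : ¬ NR θ bar (app θ bar x l) := by
  by_cases h : ∃ m, Del θ (bar x) l m
  · obtain ⟨m, hd⟩ := h
    rw [app_del hirr hd]
    exact fun hm => hl (NR.of_del hsy hbar hd hm)
  · rw [app_not h]
    intro hnr
    cases hnr with
    | here hd => exact h ⟨_, hd⟩
    | there _ h1 => exact hl h1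

theorem app_sws (hsy : ∀ a b, θ a b → θ b a) (hirr : ∀ a, ¬ θ a a)
    (h : ReflTransGen (Sw θ) l l') :
    ReflTransGen (Sw θ) (app θ bar x l) (app θ bar x l') := by
  by_cases hh : ∃ m, Del θ (bar x) l m
  · obtain ⟨m, hd⟩ := hh
    obtain ⟨m', hd', hr⟩ := Sws.del hsy h hd
    rw [app_del hirr hd, app_del hirr hd']
    exact hr
  · have hh' : ¬ ∃ m, Del θ (bar x) l' m := by
      rintro ⟨m', hd'⟩
      obtain ⟨m, hd, _⟩ := Sws.del hsy (Sws.symm' hsy h) hd'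
      exact hh ⟨m, hd⟩
    rw [app_not hh, app_not hh']
    exact ReflTransGen.lift _ (fun a b hab => Sw.cons x hab) _ _ h

/-- The action of a letter on traces. -/
noncomputable def tapp (θ : X → X → Prop) (bar : X → X) (hsy : ∀ a b, θ a b → θ b a)
    (hirr : ∀ a, ¬ θ a a) (x : X) (t : Trace X θ) : Trace X θ :=
  Con.liftOn t (fun fm => trMk θ (FreeMonoid.ofList (app θ bar x fm.toList)))
    (fun a b hab => mk_eq_of_sws (app_sws hsy hirr (sws_of_con hsy hab)))

theorem tapp_mk (hsy : ∀ a b, θ a b → θ b a) (hirr : ∀ a, ¬ θ a a) :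
    tapp θ bar hsy hirr x (trMk θ (FreeMonoid.ofList l)) =
      trMk θ (FreeMonoid.ofList (app θ bar x l)) := rfl

theorem tapp_inv (hsy : ∀ a b, θ a b → θ b a) (hirr : ∀ a, ¬ θ a a)
    (hbar : ∀ a b, θ a b → θ (bar a) b) (hx : ∀ a, ¬ θ a (bar a))
    (hbb : ∀ a, bar (bar a) = a) (hl : ¬ NR θ bar l) :
    tapp θ bar hsy hirr (bar x) (tapp θ bar hsy hirr x (trMk θ (FreeMonoid.ofList l))) =
      trMk θ (FreeMonoid.ofList l) := by
  rw [tapp_mk]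
  by_cases h : ∃ m, Del θ (bar x) l m
  · obtain ⟨m, hd⟩ := h
    rw [app_del hirr hd, tapp_mk]
    have hnd : ¬ ∃ m₂, Del θ (bar (bar x)) m m₂ := by
      rintro ⟨m₂, h₂⟩
      exact hl (NR.del_bar hsy hx hd h₂)
    rw [app_not hnd]
    exact (mk_eq_of_sws hd.sws).symm
  · rw [app_not h, tapp_mk]
    have hd' : Del θ (bar (bar x)) (x :: l) l := by rw [hbb]; exact Del.head l
    rw [app_del hirr hd']

theorem tapp_comm_aux (hsy : ∀ a b, θ a b → θ b a) (hirr : ∀ a, ¬ θ a a)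
    (hbar : ∀ a b, θ a b → θ (bar a) b) (hxy : θ x y) {mx : List X}
    (hdx : Del θ (bar x) l mx) (hny : ¬ ∃ m, Del θ (bar y) l m) :
    trMk θ (FreeMonoid.ofList (app θ bar x (app θ bar y l))) =
      trMk θ (FreeMonoid.ofList (app θ bar y (app θ bar x l))) := by
  have hyx' : θ y (bar x) := hsy _ _ (hbar _ _ hxy)
  have hxy' : θ (bar x) (bar y) := hsy _ _ (hbar _ _ (hsy _ _ (hbar _ _ hxy)))
  rw [app_not hny]
  have hdx2 : Del θ (bar x) (y :: l) (y :: mx) := Del.step hyx' hdx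
  rw [app_del hirr hdx2, app_del hirr hdx]
  have hny2 : ¬ ∃ m, Del θ (bar y) mx m := by
    rintro ⟨m₂, h₂⟩
    obtain ⟨l₂, hl₂⟩ := Del.exists_comm hxy' hdx h₂
    exact hny ⟨l₂, hl₂⟩
  rw [app_not hny2]

theorem tapp_comm (hsy : ∀ a b, θ a b → θ b a) (hirr : ∀ a, ¬ θ a a)
    (hbar : ∀ a b, θ a b → θ (bar a) b) (hx : ∀ a, ¬ θ a (bar a)) (hxy : θ x y)
    (t : Trace X θ) :
    tapp θ bar hsy hirr x (tapp θ bar hsy hirr y t) =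
      tapp θ bar hsy hirr y (tapp θ bar hsy hirr x t) := by
  refine Con.induction_on t fun fm => ?_
  have hfm : (fm : (traceCon θ).Quotient) = trMk θ (FreeMonoid.ofList fm.toList) := rfl
  rw [hfm]
  set l := fm.toList with hl
  rw [tapp_mk, tapp_mk, tapp_mk, tapp_mk]
  have hxy' : θ (bar x) (bar y) := hsy _ _ (hbar _ _ (hsy _ _ (hbar _ _ hxy)))
  by_cases h1 : ∃ m, Del θ (bar x) l m <;> by_cases h2 : ∃ m, Del θ (bar y) l m
  · obtain ⟨mx, hdx⟩ := h1
    obtain ⟨my, hdy⟩ := h2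
    have hne : bar x ≠ bar y := fun he => hirr _ (he ▸ hxy')
    obtain ⟨m₂, hA, hB⟩ := Del.diamond hne hdx hdy
    rw [app_del hirr hdy, app_del hirr hdx, app_del hirr hB, app_del hirr hA]
  · exact tapp_comm_aux hsy hirr hbar hxy h1.choose_spec h2
  · exact (tapp_comm_aux hsy hirr hbar (hsy _ _ hxy) h2.choose_spec h1).symm
  · have hx2 : ¬ ∃ m, Del θ (bar x) (y :: l) m := by
      rintro ⟨m, hd⟩
      cases hd with
      | head => exact hx _ hxy
      | step _ hd1 => exact h1 ⟨_, hd1⟩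
    have hy2 : ¬ ∃ m, Del θ (bar y) (x :: l) m := by
      rintro ⟨m, hd⟩
      cases hd with
      | head => exact hx _ (hsy _ _ hxy)
      | step _ hd1 => exact h2 ⟨_, hd1⟩
    rw [app_not h2, app_not h1, app_not hx2, app_not hy2]
    exact mk_eq_of_sws (.single (Sw.head _ hxy))

end Stmt16
namespace Stmt16

open Relation PCM

variable {A : Type*} {θ : A → A → Prop}

theorem unbar_swap (v : A ⊕ A) : unbar (Sum.swap v) = unbar v := by cases v <;> rfl

theorem htsy (hsymm : ∀ a b, θ a b → θ b a) :
    ∀ a b : A ⊕ A, tilde θ a b → tilde θ b a := fun _ _ h => hsymm _ _ h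

theorem htirr (hanti : ∀ a, ¬ θ a a) : ∀ a : A ⊕ A, ¬ tilde θ a a := fun _ h => hanti _ h

theorem htbar : ∀ a b : A ⊕ A, tilde θ a b → tilde θ (Sum.swap a) b := fun a b h => by
  show θ (unbar (Sum.swap a)) (unbar b)
  rw [unbar_swap]
  exact h

theorem htx (hanti : ∀ a, ¬ θ a a) : ∀ a : A ⊕ A, ¬ tilde θ a (Sum.swap a) := fun a h => by
  have h2 : θ (unbar a) (unbar (Sum.swap a)) := h
  rw [unbar_swap] at h2
  exact hanti _ h2

section Hyps

variable (hanti : ∀ a, ¬ θ a a) (hsymm : ∀ a b, θ a b → θ b a)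

/-- Reduced traces. -/
def RedT (t : Trace (A ⊕ A) (tilde θ)) : Prop :=
  ∃ l, trMk (tilde θ) (FreeMonoid.ofList l) = t ∧ ¬ NR (tilde θ) Sum.swap l

theorem RedT.tapp' {t : Trace (A ⊕ A) (tilde θ)} (x : A ⊕ A) (h : RedT t) :
    RedT (tapp (tilde θ) Sum.swap (htsy hsymm) (htirr hanti) x t) := by
  obtain ⟨l, rfl, hl⟩ := h
  exact ⟨_, (tapp_mk _ _).symm, app_red (htsy hsymm) htbar (htirr hanti) hl⟩

/-- The permutation of the set of reduced traces induced by a letter of `A`. -/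
noncomputable def permA (a : A) :
    Equiv.Perm {t : Trace (A ⊕ A) (tilde θ) // RedT t} where
  toFun t := ⟨tapp (tilde θ) Sum.swap (htsy hsymm) (htirr hanti) (Sum.inl a) t.1,
    RedT.tapp' hanti hsymm _ t.2⟩
  invFun t := ⟨tapp (tilde θ) Sum.swap (htsy hsymm) (htirr hanti) (Sum.inr a) t.1,
    RedT.tapp' hanti hsymm _ t.2⟩
  left_inv t := by
    refine Subtype.ext ?_
    obtain ⟨l, hmk, hl⟩ := t.2
    show tapp (tilde θ) Sum.swap (htsy hsymm) (htirr hanti) (Sum.inr a)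
      (tapp (tilde θ) Sum.swap (htsy hsymm) (htirr hanti) (Sum.inl a) t.1) = t.1
    rw [← hmk]
    exact tapp_inv (htsy hsymm) (htirr hanti) htbar (htx hanti) Sum.swap_swap
      (x := Sum.inl a) hl
  right_inv t := by
    refine Subtype.ext ?_
    obtain ⟨l, hmk, hl⟩ := t.2
    show tapp (tilde θ) Sum.swap (htsy hsymm) (htirr hanti) (Sum.inl a)
      (tapp (tilde θ) Sum.swap (htsy hsymm) (htirr hanti) (Sum.inr a) t.1) = t.1
    rw [← hmk]
    exact tapp_inv (htsy hsymm) (htirr hanti) htbar (htx hanti) Sum.swap_swap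
      (x := Sum.inr a) hl

theorem permA_comm {a b : A} (hab : θ a b) :
    permA hanti hsymm a * permA hanti hsymm b =
      permA hanti hsymm b * permA hanti hsymm a := by
  refine Equiv.ext fun t => Subtype.ext ?_
  show tapp (tilde θ) Sum.swap (htsy hsymm) (htirr hanti) (Sum.inl a)
      (tapp (tilde θ) Sum.swap (htsy hsymm) (htirr hanti) (Sum.inl b) t.1) =
    tapp (tilde θ) Sum.swap (htsy hsymm) (htirr hanti) (Sum.inl b)
      (tapp (tilde θ) Sum.swap (htsy hsymm) (htirr hanti) (Sum.inl a) t.1)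
  exact tapp_comm (htsy hsymm) (htirr hanti) htbar (htx hanti)
    (show tilde θ (Sum.inl a) (Sum.inl b) from hab) t.1

/-- The action of the free partially commutative group on reduced traces. -/
noncomputable def Phi :
    PCGroup A θ →* Equiv.Perm {t : Trace (A ⊕ A) (tilde θ) // RedT t} :=
  PresentedGroup.toGroup (f := permA hanti hsymm) (by
    rintro r ⟨a, b, hab, rfl⟩
    have hcomm := permA_comm hanti hsymm hab
    simp only [map_mul, map_inv, FreeGroup.lift_apply_of]
    rw [hcomm]
    group)

theorem Phi_gOf (a : A) : Phi hanti hsymm (gOf θ a) = permA hanti hsymm a :=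
  PresentedGroup.toGroup.of _

end Hyps

end Stmt16
namespace Stmt16

open Relation PCM

variable {A : Type*} {θ : A → A → Prop}

theorem mk_nil : trMk (tilde θ) (FreeMonoid.ofList ([] : List (A ⊕ A))) = 1 := rfl

theorem NR_nil : ¬ NR (tilde θ) Sum.swap ([] : List (A ⊕ A)) := fun h => by cases h

section Hyps

variable (hanti : ∀ a, ¬ θ a a) (hsymm : ∀ a b, θ a b → θ b a)

/-- The identity as a reduced trace. -/
noncomputable def eR : {t : Trace (A ⊕ A) (tilde θ) // RedT t} :=
  ⟨1, ⟨[], mk_nil, NR_nil⟩⟩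

/-- Iterated letter action. -/
noncomputable def rtr (l : List (A ⊕ A)) : Trace (A ⊕ A) (tilde θ) :=
  l.foldr (tapp (tilde θ) Sum.swap (htsy hsymm) (htirr hanti)) 1

theorem rtr_spec (l : List (A ⊕ A)) :
    ∃ m, trMk (tilde θ) (FreeMonoid.ofList m) = rtr hanti hsymm l ∧
      ¬ NR (tilde θ) Sum.swap m ∧ m.length ≤ l.length := by
  induction l with
  | nil => exact ⟨[], mk_nil, NR_nil, le_refl _⟩
  | cons x l ih =>
    obtain ⟨m, hm, hred, hlen⟩ := ih
    refine ⟨app (tilde θ) Sum.swap x m, ?_, app_red (htsy hsymm) htbar (htirr hanti) hred, ?_⟩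
    · show _ = tapp (tilde θ) Sum.swap (htsy hsymm) (htirr hanti) x (rtr hanti hsymm l)
      rw [← hm, tapp_mk]
    · have := app_len (θ := tilde θ) (bar := Sum.swap) (x := x) (l := m) (htirr hanti)
      simp only [List.length_cons]
      omega

theorem rtr_red {l : List (A ⊕ A)} (hl : ¬ NR (tilde θ) Sum.swap l) :
    rtr hanti hsymm l = trMk (tilde θ) (FreeMonoid.ofList l) := by
  induction l with
  | nil => exact mk_nil.symm
  | cons x l ih =>
    have h1 : ¬ NR (tilde θ) Sum.swap l := fun hh => hl (NR.there x hh)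
    have h2 : ¬ ∃ m, Del (tilde θ) (Sum.swap x) l m := fun ⟨m, hd⟩ => hl (NR.here hd)
    show tapp (tilde θ) Sum.swap (htsy hsymm) (htirr hanti) x (rtr hanti hsymm l) = _
    rw [ih h1, tapp_mk, app_not h2]

variable {s : Trace (A ⊕ A) (tilde θ) →* PCGroup A θ}

theorem s_cancel (hs : IsSection θ s) (x : A ⊕ A) :
    s (trOf (tilde θ) x) * s (trOf (tilde θ) (Sum.swap x)) = 1 := by
  cases x with
  | inl a => rw [show Sum.swap (Sum.inl a) = Sum.inr a from rfl, hs.1 a, hs.2 a, mul_inv_cancel]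
  | inr a => rw [show Sum.swap (Sum.inr a) = Sum.inl a from rfl, hs.2 a, hs.1 a, inv_mul_cancel]

theorem nr_shorter (hs : IsSection θ s) {l : List (A ⊕ A)} (h : NR (tilde θ) Sum.swap l) :
    ∃ m, s (trMk (tilde θ) (FreeMonoid.ofList m)) = s (trMk (tilde θ) (FreeMonoid.ofList l)) ∧
      m.length < l.length := by
  induction h with
  | @here x l₁ m hd =>
    refine ⟨m, ?_, ?_⟩
    · have h1 : trMk (tilde θ) (FreeMonoid.ofList l₁) =
        trMk (tilde θ) (FreeMonoid.ofList (Sum.swap x :: m)) := mk_eq_of_sws hd.sws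
      rw [mk_cons, h1, mk_cons, map_mul, map_mul, ← mul_assoc, s_cancel hs x, one_mul]
    · have := hd.length_eq
      simp only [List.length_cons]
      omega
  | @there c l₁ h ih =>
    obtain ⟨m, hm, hlen⟩ := ih
    refine ⟨c :: m, ?_, by simpa using Nat.succ_lt_succ hlen⟩
    rw [mk_cons, mk_cons, map_mul, map_mul, hm]

theorem not_red_of_nr (hs : IsSection θ s) {l : List (A ⊕ A)} (h : NR (tilde θ) Sum.swap l) :
    ¬ ReducedWrt θ s (trMk (tilde θ) (FreeMonoid.ofList l)) := by
  obtain ⟨m, hm, hlen⟩ := nr_shorter hs h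
  intro hr
  exact absurd
    (hr (trMk (tilde θ) (FreeMonoid.ofList m)) l.length m.length hm ⟨l, rfl, rfl⟩ ⟨m, rfl, rfl⟩)
    (by omega)

theorem act_of (hs : IsSection θ s) (x : A ⊕ A) (u : {t : Trace (A ⊕ A) (tilde θ) // RedT t}) :
    ((Phi hanti hsymm (s (trOf (tilde θ) x))) u).1 =
      tapp (tilde θ) Sum.swap (htsy hsymm) (htirr hanti) x u.1 := by
  cases x with
  | inl a => rw [hs.1 a, Phi_gOf]; rfl
  | inr a => rw [hs.2 a, map_inv, Phi_gOf]; rfl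

theorem act_list (hs : IsSection θ s) (l : List (A ⊕ A)) :
    ((Phi hanti hsymm (s (trMk (tilde θ) (FreeMonoid.ofList l)))) eR).1 =
      rtr hanti hsymm l := by
  induction l with
  | nil => rw [mk_nil, map_one, map_one, Equiv.Perm.one_apply]; rfl
  | cons x l ih =>
    rw [mk_cons, map_mul, map_mul, Equiv.Perm.mul_apply, act_of hanti hsymm hs]
    show tapp (tilde θ) Sum.swap (htsy hsymm) (htirr hanti) x
      ((Phi hanti hsymm (s (trMk (tilde θ) (FreeMonoid.ofList l)))) eR).1 = _
    rw [ih]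
    rfl

end Hyps

variable {s : Trace (A ⊕ A) (tilde θ) →* PCGroup A θ}

theorem red_of_not_nr (hanti : ∀ a, ¬ θ a a) (hsymm : ∀ a b, θ a b → θ b a)
    (hs : IsSection θ s) {l : List (A ⊕ A)} (hl : ¬ NR (tilde θ) Sum.swap l) :
    ReducedWrt θ s (trMk (tilde θ) (FreeMonoid.ofList l)) := by
  intro t' n n' hst hn hn'
  obtain ⟨l₀, hl₀, hn0⟩ := hn
  obtain ⟨l₁, hl₁, hn1⟩ := hn'
  have e0 : l₀.length = l.length := Sws.length_eq (sws_of_mk_eq (htsy hsymm) hl₀)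
  have hPe : rtr hanti hsymm l₁ = trMk (tilde θ) (FreeMonoid.ofList l) := by
    rw [← act_list hanti hsymm hs l₁, hl₁, hst, act_list hanti hsymm hs l,
      rtr_red hanti hsymm hl]
  obtain ⟨m, hm, _, hlen⟩ := rtr_spec hanti hsymm l₁
  have e1 : m.length = l.length :=
    Sws.length_eq (sws_of_mk_eq (htsy hsymm) (hm.trans hPe))
  omega

end Stmt16


open PCM in
/-- for `z ∉ B` and `w` a reduced trace over `B̃`, the trace `w̄·z·w`
is reduced iff `IA(z·w) = {z}`, i.e. iff `zw ∈ β_Z(B̃)`. -/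
theorem stmt_16 {A : Type*} (θ : A → A → Prop)
    (hanti : ∀ a, ¬ θ a a) (hsymm : ∀ a b, θ a b → θ b a) (B : Set A)
    (s : Trace (A ⊕ A) (tilde θ) →* PCGroup A θ) (hs : IsSection θ s)
    (z : A) (hz : z ∉ B) (wl : List (A ⊕ A)) (hwl : ∀ x ∈ wl, unbar x ∈ B)
    (hred : ReducedWrt θ s (trMk (tilde θ) (FreeMonoid.ofList wl))) :
    ReducedWrt θ s
        (trMk (tilde θ)
          (FreeMonoid.ofList (wl.reverse.map Sum.swap ++ Sum.inl z :: wl))) ↔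
      IA (tilde θ) (trMk (tilde θ) (FreeMonoid.ofList (Sum.inl z :: wl)))
        = {Sum.inl z} := by
  have hsy := Stmt16.htsy (θ := θ) hsymm
  have hRedW : ¬ Stmt16.NR (tilde θ) Sum.swap wl :=
    fun h => Stmt16.not_red_of_nr hs h hred
  constructor
  · intro hR
    have hRedL : ¬ Stmt16.NR (tilde θ) Sum.swap
        (wl.reverse.map Sum.swap ++ Sum.inl z :: wl) :=
      fun h => Stmt16.not_red_of_nr hs h hR
    ext c
    simp only [Set.mem_singleton_iff]
    constructor
    · intro hc
      obtain ⟨m, hd⟩ := (Stmt16.mem_IA_iff hsy).mp hc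
      cases hd with
      | head => rfl
      | step hzc hd1 =>
        exfalso
        obtain ⟨u, v, hW, -, hcomm⟩ := Stmt16.Del.dest hd1
        apply hRedL
        rw [hW]
        have key := Stmt16.NR_pattern' (θ := tilde θ) (bar := Sum.swap)
          (u := v.reverse.map Sum.swap) (x := c)
          (v := u.reverse.map Sum.swap ++ Sum.inl z :: u) (w := v) Sum.swap_swap ?_
        · have hrw : ((u ++ c :: v).reverse.map Sum.swap) =
              (v.reverse.map Sum.swap) ++ Sum.swap c :: (u.reverse.map Sum.swap) := by
            simp
          rw [hrw]
          simp only [List.append_assoc, List.cons_append] at key ⊢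
          exact key
        · intro e he
          rcases List.mem_append.mp he with he | he
          · obtain ⟨f, hf, rfl⟩ := List.mem_map.mp he
            rw [List.mem_reverse] at hf
            exact Stmt16.htbar _ _ (hcomm f hf)
          · rcases List.mem_cons.mp he with rfl | he
            · exact hzc
            · exact hcomm e he
    · rintro rfl
      exact (Stmt16.mem_IA_iff hsy).mpr ⟨wl, Stmt16.Del.head wl⟩
  · intro hIA
    apply Stmt16.red_of_not_nr hanti hsymm hs
    intro hNR
    rcases Stmt16.NR_split hNR with h | h | ⟨x, m, hxWb, hd⟩
    · exact hRedW (Stmt16.NR.rev hsy Stmt16.htbar Sum.swap_swap h)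
    · cases h with
      | here hd => exact hz (hwl _ hd.mem_of)
      | there _ h1 => exact hRedW h1
    · have hIAx : Sum.swap x ∈ IA (tilde θ)
          (trMk (tilde θ) (FreeMonoid.ofList (Sum.inl z :: wl))) :=
        (Stmt16.mem_IA_iff hsy).mpr ⟨m, hd⟩
      rw [hIA] at hIAx
      obtain ⟨f, hf, rfl⟩ := List.mem_map.mp hxWb
      have hfz : f = Sum.inl z := by
        have h2 : Sum.swap (Sum.swap f) = Sum.inl z := hIAx
        rwa [Sum.swap_swap] at h2
      subst hfz
      rw [List.mem_reverse] at hf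
      exact hz (hwl _ hf)
end
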